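/- arXiv:2311.05139 — 7 statements merged into one kernel-verified Lean document; each statement's English description precedes it below -/
import Mathlib

section
/- Let ψ: ℝ^k → ℝ be convex and argument-wise non-decreasing, let C ≥ 2, and suppose the class means μ_1,...,μ_C ∈ ℝ^d satisfy ‖μ_j‖ ≤ 1 for all j. Then for any random variables where (y, y_1^-, ..., y_k^-) are class labels with y uniform over {1,...,C} and each y_i^- ≠ y uniform over the remaining C-1 classes, and where representations have zero within-class variance so that the anchor representation is μ_y, the positive representation is μ_y, and each negative is μ_{y_i^-}, we have E[ψ(μ_y^⊤(μ_{y_1^-} − μ_y), ..., μ_y^⊤(μ_{y_k^-} − μ_y))] ≥ ψ(−C/(C−1), ..., −C/(C−1)). -/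
open Finset
open scoped RealInnerProductSpace BigOperators

lemma sum_piFinset_apply {k : ℕ} {β : Type*} [DecidableEq β] [Fintype β]
    (s : Finset β) (g : β → ℝ) (i : Fin k) :
    ∑ t ∈ Fintype.piFinset (fun _ : Fin k => s), g (t i)
      = (s.card : ℝ) ^ (k - 1) * ∑ j ∈ s, g j := by
  have hfib := Finset.sum_fiberwise_of_maps_to'
      (s := Fintype.piFinset (fun _ : Fin k => s)) (t := s) (g := fun t => t i)
      (fun t ht => (Fintype.mem_piFinset.1 ht) i) g
  rw [← hfib, Finset.mul_sum]
  refine Finset.sum_congr rfl fun j hj => ?_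
  rw [Finset.sum_const, nsmul_eq_mul]
  congr 1
  have hset : (Fintype.piFinset (fun _ : Fin k => s)).filter (fun t => t i = j)
      = Fintype.piFinset (Function.update (fun _ : Fin k => s) i {j}) := by
    ext t
    simp only [Finset.mem_filter, Fintype.mem_piFinset]
    constructor
    · rintro ⟨h1, h2⟩ l
      by_cases hl : l = i
      · subst hl; simp [Function.update, h2]
      · simpa [Function.update, hl] using h1 l
    · intro h
      constructor
      · intro l
        by_cases hl : l = i
        · subst hl
          have := h l
          simp [Function.update] at this
          simpa [this] using hj
        · simpa [Function.update, hl] using h l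
      · have := h i
        simpa [Function.update] using this
  rw [hset, Fintype.card_piFinset]
  have hcomp : ∀ l, (Function.update (fun _ : Fin k => s) i {j} l).card
      = Function.update (fun _ : Fin k => s.card) i 1 l := by
    intro l
    by_cases hl : l = i
    · subst hl; simp
    · simp [Function.update, hl]
  rw [Finset.prod_congr rfl (fun l _ => hcomp l),
    Finset.prod_update_of_mem (Finset.mem_univ i), one_mul,
    Finset.prod_const]
  have : (Finset.univ \ {i}).card = k - 1 := by
    rw [Finset.card_sdiff_of_subset (by simp)]
    simp
  rw [this]
  push_cast
  rfl

/-- Core convexity/combinatorial step of the SCL lower bound: for convex,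
argument-wise non-decreasing `ψ`, `C ≥ 2`, and class means in the unit ball, the
expectation over `y ~ Uniform{1..C}` and `y_i^-` i.i.d. uniform over the classes
different from `y` of `ψ(⟪μ_y, μ_{y_i^-} − μ_y⟫)_i` is at least
`ψ(−C/(C−1),...,−C/(C−1))`. -/
theorem stmt_7 {k d C : ℕ} (hC : 2 ≤ C)
    (ψ : (Fin k → ℝ) → ℝ) (hconv : ConvexOn ℝ Set.univ ψ) (hmono : Monotone ψ)
    (μ : Fin C → EuclideanSpace ℝ (Fin d)) (hnorm : ∀ j, ‖μ j‖ ≤ 1) :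
    ((C : ℝ) * ((C : ℝ) - 1) ^ k)⁻¹ *
        ∑ y : Fin C, ∑ t ∈ Finset.univ.filter (fun t : Fin k → Fin C => ∀ i, t i ≠ y),
          ψ (fun i => ⟪μ y, μ (t i) - μ y⟫)
      ≥ ψ (fun _ => -(C : ℝ) / ((C : ℝ) - 1)) := by
  have hC1 : (1:ℝ) ≤ (C:ℝ) - 1 := by
    have : (2:ℝ) ≤ (C:ℝ) := by exact_mod_cast hC
    linarith
  have hCpos : (0:ℝ) < (C:ℝ) := by linarith
  have hC1pos : (0:ℝ) < (C:ℝ) - 1 := by linarith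
  set N : ℝ := (C : ℝ) * ((C : ℝ) - 1) ^ k with hNdef
  have hNpos : 0 < N := mul_pos hCpos (pow_pos hC1pos k)
  -- the filter set equals a piFinset
  have hfil : ∀ y : Fin C,
      Finset.univ.filter (fun t : Fin k → Fin C => ∀ i, t i ≠ y)
        = Fintype.piFinset (fun _ : Fin k => Finset.univ.erase y) := by
    intro y; ext t; simp [Fintype.mem_piFinset]
  have hcard_erase : ∀ y : Fin C, (Finset.univ.erase y).card = C - 1 := by
    intro y; rw [Finset.card_erase_of_mem (Finset.mem_univ y)]; simp
  have hcast : ((C - 1 : ℕ) : ℝ) = (C : ℝ) - 1 := by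
    have : 1 ≤ C := by omega
    push_cast [this]; ring
  -- index set for Jensen
  set P : Finset ((_ : Fin C) × (Fin k → Fin C)) :=
    Finset.univ.sigma (fun y : Fin C =>
      Finset.univ.filter (fun t : Fin k → Fin C => ∀ i, t i ≠ y)) with hPdef
  set F : ((_ : Fin C) × (Fin k → Fin C)) → (Fin k → ℝ) :=
    fun p => fun i => ⟪μ p.1, μ (p.2 i) - μ p.1⟫ with hFdef
  have hPcard : (P.card : ℝ) = N := by
    rw [hPdef, Finset.card_sigma]
    have : ∀ y : Fin C,
        (Finset.univ.filter (fun t : Fin k → Fin C => ∀ i, t i ≠ y)).card = (C-1)^k := by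
      intro y
      rw [hfil y, Fintype.card_piFinset]
      simp [hcard_erase y]
    rw [Finset.sum_congr rfl (fun y _ => this y), Finset.sum_const]
    simp only [Finset.card_univ, Fintype.card_fin, smul_eq_mul]
    push_cast [hcast]
    ring
  have hw1 : ∑ _p ∈ P, N⁻¹ = 1 := by
    rw [Finset.sum_const, nsmul_eq_mul, hPcard, mul_inv_cancel₀ (ne_of_gt hNpos)]
  have hJ := hconv.map_sum_le (t := P) (w := fun _ => N⁻¹) (p := F)
      (fun _ _ => le_of_lt (inv_pos.2 hNpos)) hw1 (fun _ _ => Set.mem_univ _)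
  -- the total sums
  set S : EuclideanSpace ℝ (Fin d) := ∑ j : Fin C, μ j with hSdef
  set Q : ℝ := ∑ y : Fin C, ⟪μ y, μ y⟫ with hQdef
  have hQle : Q ≤ (C:ℝ) := by
    rw [hQdef]
    calc ∑ y : Fin C, ⟪μ y, μ y⟫ ≤ ∑ _y : Fin C, (1:ℝ) := by
          refine Finset.sum_le_sum fun y _ => ?_
          rw [real_inner_self_eq_norm_sq]
          calc ‖μ y‖ ^ 2 ≤ 1 ^ 2 := by
                have := hnorm y
                have h0 : (0:ℝ) ≤ ‖μ y‖ := norm_nonneg _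
                nlinarith
            _ = 1 := one_pow 2
      _ = (C:ℝ) := by simp
  have hA : ∑ y : Fin C, ∑ j ∈ Finset.univ.erase y, ⟪μ y, μ j - μ y⟫
      = ⟪S, S⟫ - (C:ℝ) * Q := by
    have step : ∀ y : Fin C, ∑ j ∈ Finset.univ.erase y, ⟪μ y, μ j - μ y⟫
        = ⟪μ y, S⟫ - (C:ℝ) * ⟪μ y, μ y⟫ := by
      intro y
      have h1 : ∑ j ∈ Finset.univ.erase y, ⟪μ y, μ j - μ y⟫
          = (∑ j ∈ Finset.univ.erase y, ⟪μ y, μ j⟫)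
            - ((Finset.univ.erase y).card : ℝ) * ⟪μ y, μ y⟫ := by
        simp only [inner_sub_right, Finset.sum_sub_distrib, Finset.sum_const, nsmul_eq_mul]
      have h2 : ∑ j ∈ Finset.univ.erase y, ⟪μ y, μ j⟫ = ⟪μ y, S⟫ - ⟪μ y, μ y⟫ := by
        rw [hSdef, inner_sum]
        exact Finset.sum_erase_eq_sub (Finset.mem_univ y)
      rw [h1, h2, hcard_erase y, hcast]
      ring
    rw [Finset.sum_congr rfl (fun y _ => step y), Finset.sum_sub_distrib, ← Finset.mul_sum,
      hSdef, sum_inner, ← hQdef]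
  -- pointwise lower bound on the center of mass
  have hmean : ∀ i : Fin k, -(C : ℝ) / ((C : ℝ) - 1) ≤ (∑ p ∈ P, N⁻¹ • F p) i := by
    intro i
    have hk : k - 1 + 1 = k := Nat.succ_pred_eq_of_pos i.pos
    have hcoord : (∑ p ∈ P, N⁻¹ • F p) i
        = ((C:ℝ) * ((C:ℝ) - 1))⁻¹ *
          ∑ y : Fin C, ∑ j ∈ Finset.univ.erase y, ⟪μ y, μ j - μ y⟫ := by
      rw [Finset.sum_apply]
      simp only [Pi.smul_apply, smul_eq_mul]
      rw [← Finset.mul_sum, hPdef, Finset.sum_sigma]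
      have inner_eq : ∀ y : Fin C,
          ∑ t ∈ Finset.univ.filter (fun t : Fin k → Fin C => ∀ i, t i ≠ y),
            F ⟨y, t⟩ i
          = ((C:ℝ) - 1) ^ (k-1) * ∑ j ∈ Finset.univ.erase y, ⟪μ y, μ j - μ y⟫ := by
        intro y
        rw [hfil y]
        rw [sum_piFinset_apply (Finset.univ.erase y) (fun j => ⟪μ y, μ j - μ y⟫) i]
        rw [hcard_erase y, hcast]
      rw [Finset.sum_congr rfl (fun y _ => inner_eq y), ← Finset.mul_sum, ← mul_assoc]
      congr 1
      rw [hNdef]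
      have hpow : ((C:ℝ) - 1) ^ k = ((C:ℝ) - 1) ^ (k-1) * ((C:ℝ) - 1) := by
        rw [← pow_succ, hk]
      rw [hpow]
      field_simp
    rw [hcoord, hA]
    have hSS : (0:ℝ) ≤ ⟪S, S⟫ := real_inner_self_nonneg
    have hAlow : -(C:ℝ) * (C:ℝ) ≤ ⟪S, S⟫ - (C:ℝ) * Q := by nlinarith
    have hfrac : -(C : ℝ) / ((C : ℝ) - 1)
        = ((C:ℝ) * ((C:ℝ) - 1))⁻¹ * (-(C:ℝ) * (C:ℝ)) := by
      field_simp
    rw [hfrac]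
    exact mul_le_mul_of_nonneg_left hAlow
      (le_of_lt (inv_pos.2 (mul_pos hCpos hC1pos)))
  -- combine
  rw [ge_iff_le]
  calc ψ (fun _ => -(C : ℝ) / ((C : ℝ) - 1))
      ≤ ψ (∑ p ∈ P, N⁻¹ • F p) := hmono (fun i => hmean i)
    _ ≤ ∑ p ∈ P, N⁻¹ * ψ (F p) := hJ
    _ = N⁻¹ * ∑ y : Fin C,
          ∑ t ∈ Finset.univ.filter (fun t : Fin k → Fin C => ∀ i, t i ≠ y),
            ψ (fun i => ⟪μ y, μ (t i) - μ y⟫) := by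
        rw [← Finset.mul_sum, hPdef, Finset.sum_sigma]
end

section
/- (SCL loss lower bound) Under the SCL model with equiprobable classes (λ_y = 1/C), unit-ball representations (‖f(x)‖ ≤ 1), negatives whose labels are sampled uniformly from classes different from the anchor's, common class-conditional distribution s(·|·) for anchor, positive, and negatives, and ψ_k: ℝ^k → ℝ convex and argument-wise non-decreasing, the SCL loss L^{(k)}_{SCL}(f) = E[ψ_k(f(x)^⊤(f(x_1^-)−f(x^+)), ..., f(x)^⊤(f(x_k^-)−f(x^+)))] satisfies L^{(k)}_{SCL}(f) ≥ ψ_k(−C/(C−1), ..., −C/(C−1)) for every measurable f with values in the closed unit ball of ℝ^d. -/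
open MeasureTheory Finset
open scoped RealInnerProductSpace BigOperators

/-!
With the labels fixed, Jensen's inequality for the expectation over samples, monotonicity of `ψ`
and `⟪f x, f x⁺⟫ ≤ 1` bound each term below by `ψ (⟪μ y, μ (t i)⟫ - 1)ᵢ`, where `μ j` is the mean
of `f` on class `j`. A second, finite Jensen step over the uniformly distributed labels leaves
the average of `⟪μ y, μ j⟫` over ordered pairs `j ≠ y`, which is at least `-1/(C-1)` because
their sum is `‖∑ μ j‖² - ∑ ‖μ j‖² ≥ -C`.
-/

section InnerProduct

variable {E : Type*} [NormedAddCommGroup E] [InnerProductSpace ℝ E]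

lemma abs_real_inner_le_one {x y : E} (hx : ‖x‖ ≤ 1) (hy : ‖y‖ ≤ 1) : |⟪x, y⟫| ≤ 1 :=
  (abs_real_inner_le_norm x y).trans (mul_le_one₀ hx (norm_nonneg _) hy)

lemma neg_card_le_sum_sum_erase_inner {κ : Type*} [Fintype κ] [DecidableEq κ] (μ : κ → E)
    (hμ : ∀ j, ‖μ j‖ ≤ 1) :
    -(Fintype.card κ : ℝ) ≤ ∑ y, ∑ j ∈ univ.erase y, ⟪μ y, μ j⟫ := by
  have hsum : ∑ y, ∑ j ∈ univ.erase y, ⟪μ y, μ j⟫ = ‖∑ j, μ j‖ ^ 2 - ∑ j, ‖μ j‖ ^ 2 := by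
    simp_rw [← real_inner_self_eq_norm_sq, sum_inner, inner_sum, ← sum_sub_distrib]
    refine sum_congr rfl fun y _ => ?_
    rw [← sum_erase_add _ _ (mem_univ y), add_sub_cancel_right]
  have hle : ∑ j, ‖μ j‖ ^ 2 ≤ Fintype.card κ :=
    calc ∑ j, ‖μ j‖ ^ 2 ≤ ∑ _j : κ, (1 : ℝ) :=
          sum_le_sum fun j _ => pow_le_one₀ (norm_nonneg _) (hμ j)
      _ = Fintype.card κ := by simp
  rw [hsum]
  nlinarith [sq_nonneg ‖∑ j, μ j‖]

end InnerProduct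

lemma ConvexOn.map_inv_card_smul_sum_le {ι V : Type*} [AddCommGroup V] [Module ℝ V]
    {ψ : V → ℝ} (hψ : ConvexOn ℝ Set.univ ψ) {s : Finset ι} (hs : s.Nonempty) (p : ι → V) :
    ψ ((#s : ℝ)⁻¹ • ∑ i ∈ s, p i) ≤ (#s : ℝ)⁻¹ * ∑ i ∈ s, ψ (p i) := by
  have hcard : (0 : ℝ) < #s := by exact_mod_cast hs.card_pos
  simpa [← smul_sum, mul_sum] using hψ.map_sum_le (t := s) (w := fun _ => (#s : ℝ)⁻¹) (p := p)
    (fun _ _ => by positivity) (by simp [hcard.ne']) (fun _ _ => Set.mem_univ _)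

section NegativeLabels

variable (ι κ : Type*) [Fintype ι] [DecidableEq ι] [Fintype κ] [DecidableEq κ]

def negativeLabelConfigs : Finset ((_ : κ) × (ι → κ)) :=
  univ.sigma fun y => univ.filter fun t : ι → κ => ∀ i, t i ≠ y

variable {ι κ}

lemma filter_forall_ne_eq_piFinset (y : κ) :
    univ.filter (fun t : ι → κ => ∀ i, t i ≠ y) = Fintype.piFinset fun _ => univ.erase y := by
  ext t
  simp [Fintype.mem_piFinset]

lemma sum_negativeLabelConfigs {M : Type*} [AddCommMonoid M] (g : (_ : κ) × (ι → κ) → M) :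
    ∑ σ ∈ negativeLabelConfigs ι κ, g σ
      = ∑ y, ∑ t ∈ univ.filter (fun t : ι → κ => ∀ i, t i ≠ y), g ⟨y, t⟩ :=
  sum_sigma _ _ _

lemma card_negativeLabelConfigs :
    #(negativeLabelConfigs ι κ) = Fintype.card κ * (Fintype.card κ - 1) ^ Fintype.card ι := by
  simp [negativeLabelConfigs, filter_forall_ne_eq_piFinset, Fintype.card_piFinset]

lemma neg_div_le_average_inner_sub_one {E : Type*} [NormedAddCommGroup E] [InnerProductSpace ℝ E]
    (μ : κ → E) (hμ : ∀ j, ‖μ j‖ ≤ 1) (hκ : 2 ≤ Fintype.card κ) :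
    (fun _ => -(Fintype.card κ : ℝ) / (Fintype.card κ - 1)) ≤
      (#(negativeLabelConfigs ι κ) : ℝ)⁻¹ •
        ∑ σ ∈ negativeLabelConfigs ι κ, fun i => ⟪μ σ.1, μ (σ.2 i)⟫ - 1 := by
  intro i
  have : Nonempty ι := ⟨i⟩
  obtain ⟨k, hk⟩ := Nat.exists_eq_succ_of_ne_zero (Fintype.card_ne_zero (α := ι))
  have hC1 : (0 : ℝ) < Fintype.card κ - 1 := by
    have : (2 : ℝ) ≤ Fintype.card κ := by exact_mod_cast hκ
    linarith
  have hcast : ((Fintype.card κ - 1 : ℕ) : ℝ) = Fintype.card κ - 1 := by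
    rw [Nat.cast_sub (by omega), Nat.cast_one]
  have hsum : ∑ σ ∈ negativeLabelConfigs ι κ, ⟪μ σ.1, μ (σ.2 i)⟫
      = ((Fintype.card κ : ℝ) - 1) ^ k * ∑ y, ∑ j ∈ univ.erase y, ⟪μ y, μ j⟫ := by
    rw [sum_negativeLabelConfigs, mul_sum]
    refine sum_congr rfl fun y _ => ?_
    rw [filter_forall_ne_eq_piFinset, Fintype.sum_piFinset_apply (fun j => ⟪μ y, μ j⟫),
      card_erase_of_mem (mem_univ _), nsmul_eq_mul, card_univ, hk, Nat.succ_sub_one,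
      Nat.cast_pow, hcast]
  have hpair := neg_card_le_sum_sum_erase_inner μ hμ
  have hpow : (0 : ℝ) < (Fintype.card κ - 1) ^ k := pow_pos hC1 _
  simp only [Pi.smul_apply, Finset.sum_apply, smul_eq_mul, sum_sub_distrib, sum_const, nsmul_one,
    hsum, card_negativeLabelConfigs, Nat.cast_mul, Nat.cast_pow, hcast, hk, pow_succ]
  field_simp
  linarith

end NegativeLabels

section Scores

variable {X E : Type*} [MeasurableSpace X] [NormedAddCommGroup E] [InnerProductSpace ℝ E]

/-- The arguments of `ψ` in the SCL loss at `z = ((x, x⁺), (x₁⁻, …, x_k⁻))`. -/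
def contrastiveScores {ι : Type*} (f : X → E) (z : (X × X) × (ι → X)) : ι → ℝ :=
  fun i => ⟪f z.1.1, f (z.2 i) - f z.1.2⟫

lemma integrable_inner_comp {Y : Type*} [MeasurableSpace Y] {m : Measure Y} [IsFiniteMeasure m]
    {f : X → E} (hf : StronglyMeasurable f) (hball : ∀ x, ‖f x‖ ≤ 1) {a b : Y → X}
    (ha : Measurable a) (hb : Measurable b) :
    Integrable (fun y => ⟪f (a y), f (b y)⟫) m :=
  .of_bound ((hf.comp_measurable ha).inner (hf.comp_measurable hb)).aestronglyMeasurable 1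
    (ae_of_all _ fun _ => (Real.norm_eq_abs _).trans_le (abs_real_inner_le_one (hball _) (hball _)))

lemma integral_inner_le_one {Y : Type*} [MeasurableSpace Y] {m : Measure Y} [IsProbabilityMeasure m]
    {F G : Y → E} (hF : ∀ y, ‖F y‖ ≤ 1) (hG : ∀ y, ‖G y‖ ≤ 1) :
    ∫ y, ⟪F y, G y⟫ ∂m ≤ 1 := by
  have := norm_integral_le_of_norm_le_const (μ := m) (C := 1) (f := fun y => ⟪F y, G y⟫)
    (ae_of_all _ fun y => (Real.norm_eq_abs _).trans_le (abs_real_inner_le_one (hF y) (hG y)))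
  simp only [probReal_univ, one_mul, Real.norm_eq_abs] at this
  exact (le_abs_self _).trans this

lemma integral_inner_prod [CompleteSpace E] {α β : Type*} [MeasurableSpace α] [MeasurableSpace β]
    {μ : Measure α} {ν : Measure β} [SFinite μ] [SFinite ν] {F : α → E} {G : β → E}
    (hF : Integrable F μ) (hG : Integrable G ν) :
    ∫ z, ⟪F z.1, G z.2⟫ ∂μ.prod ν = ⟪∫ x, F x ∂μ, ∫ y, G y ∂ν⟫ := by
  have hint : Integrable (fun z : α × β => ⟪F z.1, G z.2⟫) (μ.prod ν) :=
    (hF.norm.mul_prod hG.norm).mono' (hF.1.comp_fst.inner hG.1.comp_snd)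
      (ae_of_all _ fun _ => norm_inner_le_norm _ _)
  rw [integral_prod _ hint]
  simp_rw [integral_inner (𝕜 := ℝ) hG, real_inner_comm (∫ y, G y ∂ν)]
  exact integral_inner hF _

variable {ι : Type*} [Fintype ι] {s : Measure X} {q : Measure (X × X)} [IsProbabilityMeasure q]
  {ν : ι → Measure X} [∀ i, IsProbabilityMeasure (ν i)] {f : X → E}

lemma integrable_contrastiveScores_apply (hf : StronglyMeasurable f) (hball : ∀ x, ‖f x‖ ≤ 1)
    (i : ι) : Integrable (fun z => contrastiveScores f z i) (q.prod (Measure.pi ν)) := by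
  simp only [contrastiveScores, inner_sub_right]
  exact (integrable_inner_comp hf hball (by fun_prop) (by fun_prop)).sub
    (integrable_inner_comp hf hball (by fun_prop) (by fun_prop))

lemma integral_contrastiveScores_apply [CompleteSpace E] (hq : q.map Prod.fst = s)
    (hf : StronglyMeasurable f) (hball : ∀ x, ‖f x‖ ≤ 1) (i : ι) :
    ∫ z, contrastiveScores f z i ∂q.prod (Measure.pi ν)
      = ⟪∫ x, f x ∂s, ∫ x, f x ∂ν i⟫ - ∫ w, ⟪f w.1, f w.2⟫ ∂q := by
  have hfint : ∀ (m : Measure X) [IsFiniteMeasure m], Integrable f m :=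
    fun _ _ => .of_bound hf.aestronglyMeasurable 1 (ae_of_all _ hball)
  simp only [contrastiveScores, inner_sub_right]
  rw [integral_sub (integrable_inner_comp hf hball (by fun_prop) (by fun_prop))
      (integrable_inner_comp hf hball (by fun_prop) (by fun_prop)),
    integral_inner_prod (F := fun w : X × X => f w.1) (G := fun v : ι → X => f (v i))
      ((hfint _).comp_measurable measurable_fst) ((hfint _).comp_measurable (measurable_pi_apply i)),
    integral_fun_fst (f := fun w : X × X => ⟪f w.1, f w.2⟫), probReal_univ, one_smul,
    integral_comp_eval hf.aestronglyMeasurable, ← hq,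
    integral_map measurable_fst.aemeasurable (hq ▸ hf.aestronglyMeasurable)]

lemma le_integral_contrastiveScores [CompleteSpace E] {ψ : (ι → ℝ) → ℝ}
    (hconv : ConvexOn ℝ Set.univ ψ) (hmono : Monotone ψ) (hq : q.map Prod.fst = s)
    (hf : StronglyMeasurable f) (hball : ∀ x, ‖f x‖ ≤ 1)
    (hint : Integrable (fun z => ψ (contrastiveScores f z)) (q.prod (Measure.pi ν))) :
    ψ (fun i => ⟪∫ x, f x ∂s, ∫ x, f x ∂ν i⟫ - 1)
      ≤ ∫ z, ψ (contrastiveScores f z) ∂q.prod (Measure.pi ν) := by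
  have hcoord := integrable_contrastiveScores_apply (q := q) (ν := ν) hf hball
  calc ψ (fun i => ⟪∫ x, f x ∂s, ∫ x, f x ∂ν i⟫ - 1)
      ≤ ψ (∫ z, contrastiveScores f z ∂q.prod (Measure.pi ν)) := hmono fun i => by
        rw [eval_integral hcoord, integral_contrastiveScores_apply hq hf hball]
        linarith [integral_inner_le_one (m := q) (fun w => hball w.1) (fun w => hball w.2)]
    _ ≤ ∫ z, ψ (contrastiveScores f z) ∂q.prod (Measure.pi ν) :=
      hconv.map_integral_le (hconv.continuousOn isOpen_univ) isClosed_univ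
        (ae_of_all _ fun _ => Set.mem_univ _) (Integrable.of_eval hcoord) hint

end Scores

theorem stmt_8_general {k d C : ℕ} (hC : 2 ≤ C) {X : Type*} [MeasurableSpace X]
    (ψ : (Fin k → ℝ) → ℝ) (hconv : ConvexOn ℝ Set.univ ψ) (hmono : Monotone ψ)
    (s : Fin C → Measure X) [∀ j, IsProbabilityMeasure (s j)]
    (q : Fin C → Measure (X × X)) [∀ j, IsProbabilityMeasure (q j)]
    (hq1 : ∀ j, (q j).map Prod.fst = s j)
    (f : X → EuclideanSpace ℝ (Fin d)) (hf : Measurable f) (hball : ∀ x, ‖f x‖ ≤ 1)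
    (hint : ∀ (y : Fin C) (t : Fin k → Fin C),
      Integrable (fun z : (X × X) × (Fin k → X) =>
          ψ fun i => ⟪f z.1.1, f (z.2 i) - f z.1.2⟫)
        ((q y).prod (Measure.pi fun i => s (t i)))) :
    ((C : ℝ) * ((C : ℝ) - 1) ^ k)⁻¹ *
        ∑ y : Fin C,
          ∑ t ∈ Finset.univ.filter (fun t : Fin k → Fin C => ∀ i, t i ≠ y),
            ∫ z, ψ (fun i => ⟪f z.1.1, f (z.2 i) - f z.1.2⟫)
              ∂((q y).prod (Measure.pi fun i => s (t i)))
      ≥ ψ (fun _ => -(C : ℝ) / ((C : ℝ) - 1)) := by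
  set μ : Fin C → EuclideanSpace ℝ (Fin d) := fun j => ∫ x, f x ∂s j
  set T := negativeLabelConfigs (Fin k) (Fin C)
  have hμ : ∀ j, ‖μ j‖ ≤ 1 := fun j => by
    simpa using norm_integral_le_of_norm_le_const (μ := s j) (ae_of_all _ hball)
  have hT : #T = C * (C - 1) ^ k := by
    simp only [T, card_negativeLabelConfigs, Fintype.card_fin]
  have hTpos : T.Nonempty := card_pos.1 (hT ▸ Nat.mul_pos (by omega) (pow_pos (by omega) _))
  have hTreal : (#T : ℝ) = C * (C - 1) ^ k := by
    rw [hT, Nat.cast_mul, Nat.cast_pow, Nat.cast_sub (by omega), Nat.cast_one]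
  rw [ge_iff_le, ← hTreal]
  calc ψ (fun _ => -(C : ℝ) / ((C : ℝ) - 1))
      ≤ ψ ((#T : ℝ)⁻¹ • ∑ σ ∈ T, fun i => ⟪μ σ.1, μ (σ.2 i)⟫ - 1) := by
        simpa using hmono (neg_div_le_average_inner_sub_one (ι := Fin k) μ hμ (by simpa using hC))
    _ ≤ (#T : ℝ)⁻¹ * ∑ σ ∈ T, ψ fun i => ⟪μ σ.1, μ (σ.2 i)⟫ - 1 :=
        hconv.map_inv_card_smul_sum_le hTpos _
    _ ≤ (#T : ℝ)⁻¹ * ∑ σ ∈ T, ∫ z, ψ (contrastiveScores f z)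
          ∂(q σ.1).prod (Measure.pi fun i => s (σ.2 i)) := by
        gcongr with σ
        exact le_integral_contrastiveScores hconv hmono (hq1 σ.1) hf.stronglyMeasurable hball
          (hint σ.1 σ.2)
    _ = _ := by
        rw [sum_negativeLabelConfigs]
        -- the two filters differ in their `Decidable` instances
        congr!

/-- SCL loss lower bound: under equiprobable classes, unit-ball representations,
common class-conditional distribution `s` for anchor/positive/negatives (the
anchor–positive pair has joint `q y` with both marginals `s y`), and negatives
conditionally i.i.d. with labels uniform over classes different from the anchor's,
any convex argument-wise non-decreasing `ψ` satisfies
`L_SCL(f) ≥ ψ(−C/(C−1),...,−C/(C−1))`. -/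
theorem stmt_8 {k d C : ℕ} (hC : 2 ≤ C) {X : Type*} [MeasurableSpace X]
    (ψ : (Fin k → ℝ) → ℝ) (hconv : ConvexOn ℝ Set.univ ψ) (hmono : Monotone ψ)
    (s : Fin C → Measure X) [∀ j, IsProbabilityMeasure (s j)]
    (q : Fin C → Measure (X × X)) [∀ j, IsProbabilityMeasure (q j)]
    (hq1 : ∀ j, (q j).map Prod.fst = s j) (hq2 : ∀ j, (q j).map Prod.snd = s j)
    (f : X → EuclideanSpace ℝ (Fin d)) (hf : Measurable f) (hball : ∀ x, ‖f x‖ ≤ 1)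
    (hint : ∀ (y : Fin C) (t : Fin k → Fin C),
      Integrable (fun z : (X × X) × (Fin k → X) =>
          ψ fun i => ⟪f z.1.1, f (z.2 i) - f z.1.2⟫)
        ((q y).prod (Measure.pi fun i => s (t i)))) :
    ((C : ℝ) * ((C : ℝ) - 1) ^ k)⁻¹ *
        ∑ y : Fin C,
          ∑ t ∈ Finset.univ.filter (fun t : Fin k → Fin C => ∀ i, t i ≠ y),
            ∫ z, ψ (fun i => ⟪f z.1.1, f (z.2 i) - f z.1.2⟫)
              ∂((q y).prod (Measure.pi fun i => s (t i)))
      ≥ ψ (fun _ => -(C : ℝ) / ((C : ℝ) - 1)) :=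
  stmt_8_general hC ψ hconv hmono s q hq1 f hf hball hint
end

section
/- (Sufficiency of ETF for attaining the SCL bound) Under the SCL model with equiprobable classes and unit-ball representations, if f satisfies μ_j^⊤ μ_ℓ = −1/(C−1) for all j ≠ ℓ (where μ_j := E_{x~s(·|j)}[f(x)]), then L^{(k)}_{SCL}(f) = ψ_k(−C/(C−1), ..., −C/(C−1)), i.e., equality holds in the SCL lower bound. -/
open MeasureTheory Finset
open scoped RealInnerProductSpace BigOperators

/-- Sufficiency of the ETF condition for attaining the SCL lower bound: in the SCL
model with equiprobable classes and unit-ball representations, if the class means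
`μ_j = E_{x~s(·|j)}[f(x)]` satisfy `⟪μ_j, μ_ℓ⟫ = −1/(C−1)` for all `j ≠ ℓ`, then
`L_SCL(f) = ψ(−C/(C−1),...,−C/(C−1))`. -/
theorem stmt_9 {k d C : ℕ} (hC : 2 ≤ C) {X : Type*} [MeasurableSpace X]
    (ψ : (Fin k → ℝ) → ℝ) (hconv : ConvexOn ℝ Set.univ ψ) (hmono : Monotone ψ)
    (s : Fin C → Measure X) [∀ j, IsProbabilityMeasure (s j)]
    (q : Fin C → Measure (X × X)) [∀ j, IsProbabilityMeasure (q j)]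
    (hq1 : ∀ j, (q j).map Prod.fst = s j) (hq2 : ∀ j, (q j).map Prod.snd = s j)
    (f : X → EuclideanSpace ℝ (Fin d)) (hf : Measurable f) (hball : ∀ x, ‖f x‖ ≤ 1)
    (hintf : ∀ j, Integrable f (s j))
    (hint : ∀ (y : Fin C) (t : Fin k → Fin C),
      Integrable (fun z : (X × X) × (Fin k → X) =>
          ψ fun i => ⟪f z.1.1, f (z.2 i) - f z.1.2⟫)
        ((q y).prod (Measure.pi fun i => s (t i))))
    (μ : Fin C → EuclideanSpace ℝ (Fin d)) (hμ : ∀ j, μ j = ∫ x, f x ∂(s j))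
    (hip : ∀ j ℓ, j ≠ ℓ → ⟪μ j, μ ℓ⟫ = -1 / ((C : ℝ) - 1)) :
    ((C : ℝ) * ((C : ℝ) - 1) ^ k)⁻¹ *
        ∑ y : Fin C,
          ∑ t ∈ Finset.univ.filter (fun t : Fin k → Fin C => ∀ i, t i ≠ y),
            ∫ z, ψ (fun i => ⟪f z.1.1, f (z.2 i) - f z.1.2⟫)
              ∂((q y).prod (Measure.pi fun i => s (t i)))
      = ψ (fun _ => -(C : ℝ) / ((C : ℝ) - 1)) := by
  have hC2 : (2 : ℝ) ≤ (C : ℝ) := by exact_mod_cast hC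
  have hC1 : (0 : ℝ) < (C : ℝ) - 1 := by linarith
  have hC1' : ((C : ℝ) - 1) ≠ 0 := ne_of_gt hC1
  -- class means have norm at most 1
  have hμle : ∀ j, ‖μ j‖ ≤ 1 := by
    intro j
    rw [hμ j]
    calc ‖∫ x, f x ∂ s j‖ ≤ ∫ x, ‖f x‖ ∂ s j := norm_integral_le_integral_norm _
      _ ≤ ∫ _, (1 : ℝ) ∂ s j := integral_mono (hintf j).norm (integrable_const 1) hball
      _ = 1 := by simp
  -- inner product of the sum with itself
  have hSS : ⟪∑ j, μ j, ∑ j, μ j⟫ = (∑ j, ‖μ j‖ ^ 2) - C := by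
    rw [sum_inner]
    have h1 : ∀ j ∈ (univ : Finset (Fin C)), ⟪μ j, ∑ ℓ, μ ℓ⟫ = ‖μ j‖ ^ 2 - 1 := by
      intro j _
      rw [inner_sum, ← Finset.add_sum_erase _ _ (mem_univ j),
        Finset.sum_congr rfl (fun ℓ hℓ => hip j ℓ (Finset.ne_of_mem_erase hℓ).symm),
        Finset.sum_const, Finset.card_erase_of_mem (mem_univ j), Finset.card_univ,
        Fintype.card_fin, real_inner_self_eq_norm_sq]
      have hcast : ((C - 1 : ℕ) : ℝ) = (C : ℝ) - 1 := by
        have h1 : 1 ≤ C := by omega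
        push_cast [h1]; ring
      rw [nsmul_eq_mul, hcast]
      field_simp
      ring
    rw [Finset.sum_congr rfl h1, Finset.sum_sub_distrib, Finset.sum_const, card_univ,
      Fintype.card_fin, nsmul_eq_mul, mul_one]
  -- all class means have norm exactly 1
  have hμnorm : ∀ j, ‖μ j‖ = 1 := by
    have h0 : (0 : ℝ) ≤ (∑ j, ‖μ j‖ ^ 2) - C := hSS ▸ real_inner_self_nonneg
    have hnn : ∀ j ∈ (univ : Finset (Fin C)), (0 : ℝ) ≤ 1 - ‖μ j‖ ^ 2 := by
      intro j _
      have := hμle j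
      nlinarith [norm_nonneg (μ j)]
    have hsum0 : ∑ j : Fin C, (1 - ‖μ j‖ ^ 2) = 0 := by
      have hle : ∑ j : Fin C, (1 - ‖μ j‖ ^ 2) ≤ 0 := by
        rw [Finset.sum_sub_distrib, Finset.sum_const, card_univ, Fintype.card_fin,
          nsmul_eq_mul, mul_one]
        linarith
      have hge : (0 : ℝ) ≤ ∑ j : Fin C, (1 - ‖μ j‖ ^ 2) := Finset.sum_nonneg hnn
      linarith
    intro j
    have := (Finset.sum_eq_zero_iff_of_nonneg hnn).1 hsum0 j (mem_univ j)
    nlinarith [norm_nonneg (μ j)]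
  -- a.e. concentration of f on the class mean
  have hfs : ∀ j, ∀ᵐ x ∂ s j, f x = μ j := by
    intro j
    have hint1 : Integrable (fun x => ⟪μ j, f x⟫) (s j) := (hintf j).const_inner (μ j)
    have hnn : ∀ x, (0 : ℝ) ≤ 1 - ⟪μ j, f x⟫ := by
      intro x
      have h1 : ⟪μ j, f x⟫ ≤ ‖μ j‖ * ‖f x‖ := real_inner_le_norm _ _
      have h2 := hball x
      rw [hμnorm j] at h1
      linarith
    have hzero : ∫ x, (1 - ⟪μ j, f x⟫) ∂ s j = 0 := by
      rw [integral_sub (integrable_const 1) hint1, integral_inner (hintf j), ← hμ j,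
        real_inner_self_eq_norm_sq, hμnorm j]
      simp
    have hae := (integral_eq_zero_iff_of_nonneg hnn ((integrable_const 1).sub hint1)).1 hzero
    filter_upwards [hae] with x hx
    have h1 : ⟪μ j, f x⟫ = 1 := by
      have : (1 : ℝ) - ⟪μ j, f x⟫ = 0 := hx
      linarith
    have h2 : ⟪f x, μ j⟫ = 1 := by rw [real_inner_comm]; exact h1
    have hns : ‖f x - μ j‖ ^ 2 ≤ 0 := by
      rw [norm_sub_sq_real, h2, hμnorm j]
      nlinarith [hball x, norm_nonneg (f x)]
    have : ‖f x - μ j‖ = 0 := by nlinarith [norm_nonneg (f x - μ j)]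
    exact sub_eq_zero.1 (norm_eq_zero.1 this)
  -- each integral equals the constant value
  have key : ∀ (y : Fin C) (t : Fin k → Fin C), (∀ i, t i ≠ y) →
      ∫ z, ψ (fun i => ⟪f z.1.1, f (z.2 i) - f z.1.2⟫)
          ∂((q y).prod (Measure.pi fun i => s (t i)))
        = ψ (fun _ => -(C : ℝ) / ((C : ℝ) - 1)) := by
    intro y t ht
    have h1 : ∀ᵐ p ∂ q y, f p.1 = μ y :=
      ae_of_ae_map measurable_fst.aemeasurable (by rw [hq1 y]; exact hfs y)
    have h2 : ∀ᵐ p ∂ q y, f p.2 = μ y :=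
      ae_of_ae_map measurable_snd.aemeasurable (by rw [hq2 y]; exact hfs y)
    have h3 : ∀ᵐ w ∂ (Measure.pi fun i => s (t i)), ∀ i, f (w i) = μ (t i) := by
      rw [ae_all_iff]
      intro i
      exact (Measure.tendsto_eval_ae_ae (μ := fun i => s (t i)) (i := i)).eventually
        (hfs (t i))
    have H1 : ∀ᵐ z ∂ ((q y).prod (Measure.pi fun i => s (t i))),
        f z.1.1 = μ y ∧ f z.1.2 = μ y := by
      refine ae_of_ae_map (p := fun p : X × X => f p.1 = μ y ∧ f p.2 = μ y)
        measurable_fst.aemeasurable ?_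
      rw [Measure.map_fst_prod]
      simpa [measure_univ] using h1.and h2
    have H2 : ∀ᵐ z ∂ ((q y).prod (Measure.pi fun i => s (t i))),
        ∀ i, f (z.2 i) = μ (t i) := by
      refine ae_of_ae_map (p := fun w : Fin k → X => ∀ i, f (w i) = μ (t i))
        measurable_snd.aemeasurable ?_
      rw [Measure.map_snd_prod]
      simpa [measure_univ] using h3
    have heq : (fun z : (X × X) × (Fin k → X) =>
          ψ (fun i => ⟪f z.1.1, f (z.2 i) - f z.1.2⟫))
        =ᵐ[(q y).prod (Measure.pi fun i => s (t i))]
          fun _ => ψ (fun _ => -(C : ℝ) / ((C : ℝ) - 1)) := by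
      filter_upwards [H1, H2] with z hz1 hz2
      congr 1
      funext i
      rw [hz1.1, hz1.2, hz2 i, inner_sub_right, hip y (t i) (ht i).symm,
        real_inner_self_eq_norm_sq, hμnorm y]
      field_simp
      ring
    rw [integral_congr_ae heq, integral_const]
    simp [measure_univ]
  -- count of admissible tuples
  have hcard : ∀ y : Fin C,
      (univ.filter fun t : Fin k → Fin C => ∀ i, t i ≠ y).card = (C - 1) ^ k := by
    intro y
    have hset : (univ.filter fun t : Fin k → Fin C => ∀ i, t i ≠ y)
        = Fintype.piFinset (fun _ : Fin k => univ.erase y) := by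
      ext t
      simp [Fintype.mem_piFinset]
    rw [hset, Fintype.card_piFinset]
    simp [Finset.card_erase_of_mem]
  -- put everything together
  have hsum : ∀ y : Fin C,
      ∑ t ∈ Finset.univ.filter (fun t : Fin k → Fin C => ∀ i, t i ≠ y),
          ∫ z, ψ (fun i => ⟪f z.1.1, f (z.2 i) - f z.1.2⟫)
            ∂((q y).prod (Measure.pi fun i => s (t i)))
        = ((C - 1) ^ k : ℕ) • ψ (fun _ => -(C : ℝ) / ((C : ℝ) - 1)) := by
    intro y
    rw [Finset.sum_congr rfl
        (fun t htm => key y t (by simpa using (Finset.mem_filter.1 htm).2)),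
      Finset.sum_const, hcard y]
  rw [Finset.sum_congr rfl (fun y _ => hsum y), Finset.sum_const, card_univ, Fintype.card_fin]
  have hcast : ((C - 1 : ℕ) : ℝ) = (C : ℝ) - 1 := by
    have h1 : 1 ≤ C := by omega
    push_cast [h1]; ring
  rw [nsmul_eq_mul, nsmul_eq_mul, Nat.cast_pow, hcast]
  have hCne : (C : ℝ) ≠ 0 := by positivity
  have hpk : ((C : ℝ) - 1) ^ k ≠ 0 := pow_ne_zero _ hC1'
  field_simp
end

section
/- (Hard-negative CL loss dominates CL loss) Let ψ_k: ℝ^k → ℝ be argument-wise non-decreasing and η: ℝ^k → ℝ a hardening function (non-negative, argument-wise non-decreasing) with 0 < γ(x,y,f) := E_{x_{1:k}^- i.i.d. p^-(·|y)}[η(f(x)^⊤f(x_1^-), ..., f(x)^⊤f(x_k^-))] < ∞. Define the tilted negative distribution p_H^-(x_{1:k}^-|x,x^+,y) := (η(f(x)^⊤f(x_1^-),...,f(x)^⊤f(x_k^-))/γ(x,y,f)) ∏_i p^-(x_i^-|y). Then E_{(x,x^+,y)} E_{p_H^-}[ψ_k(f(x)^⊤(f(x_1^-)−f(x^+)), ...,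 f(x)^⊤(f(x_k^-)−f(x^+)))] ≥ E_{(x,x^+,y)} E_{i.i.d. p^-}[ψ_k(f(x)^⊤(f(x_1^-)−f(x^+)), ..., f(x)^⊤(f(x_k^-)−f(x^+)))], i.e., L^{(k)}_{HSCL}(f) ≥ L^{(k)}_{SCL}(f). -/
open MeasureTheory
open scoped RealInnerProductSpace BigOperators

private lemma intbdd {X : Type*} [MeasurableSpace X] {μ : Measure X} [IsFiniteMeasure μ]
    {F : X → ℝ} (hm : AEStronglyMeasurable F μ) {Cb : ℝ} (hb : ∀ x, |F x| ≤ Cb) :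
    Integrable F μ :=
  Integrable.mono' (integrable_const Cb) hm (Filter.Eventually.of_forall fun x => by
    simpa using hb x)

private lemma cheb {X : Type*} [MeasurableSpace X] (μ : Measure X) [IsProbabilityMeasure μ]
    (G H : X → ℝ) (Cg Ch : ℝ) (hGb : ∀ x, |G x| ≤ Cg) (hHb : ∀ x, |H x| ≤ Ch)
    (hGm : AEStronglyMeasurable G μ) (hHm : AEStronglyMeasurable H μ)
    (T : Set X) (hT : ∀ᵐ x ∂μ, x ∈ T)
    (hcom : ∀ a ∈ T, ∀ b ∈ T, 0 ≤ (G a - G b) * (H a - H b)) :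
    (∫ x, G x ∂μ) * (∫ x, H x ∂μ) ≤ ∫ x, G x * H x ∂μ := by
  have hGi : Integrable G μ := intbdd hGm hGb
  have hHi : Integrable H μ := intbdd hHm hHb
  have hGHi : Integrable (fun x => G x * H x) μ :=
    intbdd (hGm.mul hHm) (Cb := Cg * Ch) (fun x => by
      rw [abs_mul]
      exact mul_le_mul (hGb x) (hHb x) (abs_nonneg _) ((abs_nonneg _).trans (hGb x)))
  have hT0 : μ {x | x ∉ T} = 0 := hT
  obtain ⟨N, hTN, hNm, hN0⟩ := exists_measurable_superset_of_null hT0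
  have hprodae : ∀ᵐ p ∂(μ.prod μ), p.1 ∈ T ∧ p.2 ∈ T := by
    rw [MeasureTheory.ae_iff]
    refine measure_mono_null (fun p hp => ?_)
      (?_ : (μ.prod μ) (N ×ˢ Set.univ ∪ Set.univ ×ˢ N) = 0)
    · simp only [Set.mem_setOf_eq, not_and_or] at hp
      rcases hp with h | h
      · exact Or.inl ⟨hTN h, trivial⟩
      · exact Or.inr ⟨trivial, hTN h⟩
    · refine measure_union_null ?_ ?_ <;> simp [Measure.prod_prod, hN0]
  have key : 0 ≤ ∫ p, (G p.1 - G p.2) * (H p.1 - H p.2) ∂(μ.prod μ) := by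
    refine integral_nonneg_of_ae ?_
    filter_upwards [hprodae] with p hp
    exact hcom _ hp.1 _ hp.2
  have i1 : Integrable (fun p : X × X => G p.1 * H p.1) (μ.prod μ) := by
    have h := hGHi.mul_prod (integrable_const (1 : ℝ)) (ν := μ)
    simpa using h
  have i2 : Integrable (fun p : X × X => G p.2 * H p.2) (μ.prod μ) := by
    have h := (integrable_const (1 : ℝ) (μ := μ)).mul_prod hGHi
    simpa using h
  have i3 : Integrable (fun p : X × X => G p.1 * H p.2) (μ.prod μ) := hGi.mul_prod hHi
  have i4 : Integrable (fun p : X × X => G p.2 * H p.1) (μ.prod μ) := by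
    have h := hHi.mul_prod hGi
    simpa [mul_comm] using h
  have expand : (fun p : X × X => (G p.1 - G p.2) * (H p.1 - H p.2)) =
      fun p => (G p.1 * H p.1 + G p.2 * H p.2) - (G p.1 * H p.2 + G p.2 * H p.1) := by
    funext p; ring
  have i12 : Integrable (fun p : X × X => G p.1 * H p.1 + G p.2 * H p.2) (μ.prod μ) :=
    i1.add i2
  have i34 : Integrable (fun p : X × X => G p.1 * H p.2 + G p.2 * H p.1) (μ.prod μ) :=
    i3.add i4
  rw [expand, integral_sub i12 i34, integral_add i1 i2, integral_add i3 i4] at key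
  have e1 : ∫ p : X × X, G p.1 * H p.1 ∂(μ.prod μ) = ∫ x, G x * H x ∂μ := by
    have h := integral_prod_mul (μ := μ) (ν := μ) (fun x => G x * H x) (fun _ => (1 : ℝ))
    simpa using h
  have e2 : ∫ p : X × X, G p.2 * H p.2 ∂(μ.prod μ) = ∫ x, G x * H x ∂μ := by
    have h := integral_prod_mul (μ := μ) (ν := μ) (fun _ => (1 : ℝ)) (fun x => G x * H x)
    simpa using h
  have e3 : ∫ p : X × X, G p.1 * H p.2 ∂(μ.prod μ) = (∫ x, G x ∂μ) * ∫ x, H x ∂μ :=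
    integral_prod_mul G H
  have e4 : ∫ p : X × X, G p.2 * H p.1 ∂(μ.prod μ) = (∫ x, G x ∂μ) * ∫ x, H x ∂μ := by
    have h := integral_prod_mul (μ := μ) (ν := μ) H G
    simpa [mul_comm] using h
  rw [e1, e2, e3, e4] at key
  linarith

private lemma consmono {k : ℕ} {c c' : ℝ} (hcc : c ≤ c') {q q' : Fin k → ℝ} (hq : q ≤ q') :
    (Fin.cons c q : Fin (k + 1) → ℝ) ≤ Fin.cons c' q' := by
  intro i
  refine Fin.cases ?_ ?_ i
  · simpa using hcc
  · intro j; simpa using hq j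

private lemma harris_bdd {X : Type*} [MeasurableSpace X] :
    ∀ (k : ℕ) (μ : Measure X), IsProbabilityMeasure μ → ∀ (s : X → ℝ)
      (g h : (Fin k → ℝ) → ℝ), Monotone g → Monotone h → ∀ (Cg Ch : ℝ),
      (∀ t, |g t| ≤ Cg) → (∀ t, |h t| ≤ Ch) →
      AEStronglyMeasurable (fun v : Fin k → X => g fun i => s (v i))
        (Measure.pi fun _ => μ) →
      AEStronglyMeasurable (fun v : Fin k → X => h fun i => s (v i))
        (Measure.pi fun _ => μ) →
      (∫ v, g (fun i => s (v i)) ∂(Measure.pi fun _ : Fin k => μ)) *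
          (∫ v, h (fun i => s (v i)) ∂(Measure.pi fun _ : Fin k => μ)) ≤
        ∫ v, (g fun i => s (v i)) * (h fun i => s (v i))
          ∂(Measure.pi fun _ : Fin k => μ) := by
  intro k
  induction k with
  | zero =>
    intro μ hP s g h _ _ Cg Ch _ _ _ _
    have hcon : ∀ v : Fin 0 → X, (fun i => s (v i)) = (Fin.elim0 : Fin 0 → ℝ) :=
      fun v => funext fun i => i.elim0
    haveI := hP
    simp [hcon]
  | succ k IH =>
    intro μ hP s g h hg hh Cg Ch hgb hhb hgm hhm
    haveI := hP
    set π : Measure (Fin k → X) := Measure.pi fun _ => μ with hπ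
    haveI : IsProbabilityMeasure π := by infer_instance
    set e := MeasurableEquiv.piFinSuccAbove (fun _ : Fin (k + 1) => X) 0 with he
    have mp : MeasurePreserving e (Measure.pi fun _ => μ) (μ.prod π) :=
      measurePreserving_piFinSuccAbove (fun _ : Fin (k + 1) => μ) 0
    set G' : X × (Fin k → X) → ℝ :=
      fun p => g (Fin.cons (s p.1) fun j => s (p.2 j)) with hG'
    set H' : X × (Fin k → X) → ℝ :=
      fun p => h (Fin.cons (s p.1) fun j => s (p.2 j)) with hH'
    have hsymm : ∀ p : X × (Fin k → X), e.symm p = Fin.cons p.1 p.2 := by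
      intro p
      simp [he, MeasurableEquiv.piFinSuccAbove, Fin.consEquiv]
    have hcons : ∀ p : X × (Fin k → X),
        (fun i => s ((Fin.cons p.1 p.2 : Fin (k + 1) → X) i)) =
          Fin.cons (s p.1) fun j => s (p.2 j) := by
      intro p
      funext i
      refine Fin.cases ?_ ?_ i <;> simp
    have hGe : ∀ v : Fin (k + 1) → X, G' (e v) = g fun i => s (v i) := by
      intro v
      have h1 : e.symm (e v) = v := e.symm_apply_apply v
      rw [hsymm] at h1
      calc G' (e v) = g fun i => s ((Fin.cons (e v).1 (e v).2 : Fin (k + 1) → X) i) := by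
            rw [hG']; rw [hcons]
        _ = g fun i => s (v i) := by rw [h1]
    have hHe : ∀ v : Fin (k + 1) → X, H' (e v) = h fun i => s (v i) := by
      intro v
      have h1 : e.symm (e v) = v := e.symm_apply_apply v
      rw [hsymm] at h1
      calc H' (e v) = h fun i => s ((Fin.cons (e v).1 (e v).2 : Fin (k + 1) → X) i) := by
            rw [hH']; rw [hcons]
        _ = h fun i => s (v i) := by rw [h1]
    have mps : MeasurePreserving e.symm (μ.prod π) (Measure.pi fun _ => μ) :=
      MeasurePreserving.symm e mp
    have hG'm : AEStronglyMeasurable G' (μ.prod π) := by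
      have h1 := hgm.comp_quasiMeasurePreserving mps.quasiMeasurePreserving
      refine h1.congr (Filter.Eventually.of_forall fun p => ?_)
      show g (fun i => s (e.symm p i)) = G' p
      rw [hsymm, hG', hcons]
    have hH'm : AEStronglyMeasurable H' (μ.prod π) := by
      have h1 := hhm.comp_quasiMeasurePreserving mps.quasiMeasurePreserving
      refine h1.congr (Filter.Eventually.of_forall fun p => ?_)
      show h (fun i => s (e.symm p i)) = H' p
      rw [hsymm, hH', hcons]
    have hG'b : ∀ p, |G' p| ≤ Cg := fun p => hgb _
    have hH'b : ∀ p, |H' p| ≤ Ch := fun p => hhb _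
    have hCg0 : 0 ≤ Cg := (abs_nonneg _).trans (hgb (fun _ => 0))
    have hCh0 : 0 ≤ Ch := (abs_nonneg _).trans (hhb (fun _ => 0))
    have hGH'b : ∀ p, |G' p * H' p| ≤ Cg * Ch := fun p => by
      rw [abs_mul]
      exact mul_le_mul (hG'b p) (hH'b p) (abs_nonneg _) hCg0
    -- transfer integrals through e
    have intG : ∫ v, g (fun i => s (v i)) ∂(Measure.pi fun _ : Fin (k + 1) => μ) =
        ∫ p, G' p ∂(μ.prod π) := by
      rw [← mp.integral_comp' G']
      exact integral_congr_ae (Filter.Eventually.of_forall fun v => (hGe v).symm)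
    have intH : ∫ v, h (fun i => s (v i)) ∂(Measure.pi fun _ : Fin (k + 1) => μ) =
        ∫ p, H' p ∂(μ.prod π) := by
      rw [← mp.integral_comp' H']
      exact integral_congr_ae (Filter.Eventually.of_forall fun v => (hHe v).symm)
    have intGH : ∫ v, (g fun i => s (v i)) * (h fun i => s (v i))
          ∂(Measure.pi fun _ : Fin (k + 1) => μ) =
        ∫ p, G' p * H' p ∂(μ.prod π) := by
      rw [← mp.integral_comp' fun p => G' p * H' p]
      exact integral_congr_ae (Filter.Eventually.of_forall fun v => by
        show (g fun i => s (v i)) * (h fun i => s (v i)) = G' (e v) * H' (e v)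
        rw [hGe v, hHe v])
    -- marginal functions
    set G₁ : X → ℝ := fun x => ∫ w, G' (x, w) ∂π with hG₁
    set H₁ : X → ℝ := fun x => ∫ w, H' (x, w) ∂π with hH₁
    have hG₁m : AEStronglyMeasurable G₁ μ := hG'm.integral_prod_right'
    have hH₁m : AEStronglyMeasurable H₁ μ := hH'm.integral_prod_right'
    have bdd_int : ∀ (F : (Fin k → X) → ℝ) (Cb : ℝ), (∀ w, |F w| ≤ Cb) →
        |∫ w, F w ∂π| ≤ Cb := by
      intro F Cb hFb
      have h1 : ‖∫ w, F w ∂π‖ ≤ Cb * (π Set.univ).toReal :=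
        norm_integral_le_of_norm_le_const (Filter.Eventually.of_forall fun w => by
          simpa using hFb w)
      simpa using h1
    have hG₁b : ∀ x, |G₁ x| ≤ Cg := fun x => bdd_int _ _ fun w => hG'b (x, w)
    have hH₁b : ∀ x, |H₁ x| ≤ Ch := fun x => bdd_int _ _ fun w => hH'b (x, w)
    -- a.e. slice measurability
    set T : Set X := {x | AEStronglyMeasurable (fun w => G' (x, w)) π ∧
        AEStronglyMeasurable (fun w => H' (x, w)) π} with hTdef
    have hT : ∀ᵐ x ∂μ, x ∈ T := by
      filter_upwards [hG'm.prodMk_left, hH'm.prodMk_left] with x h1 h2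
      exact ⟨h1, h2⟩
    -- pointwise inner Harris via IH
    have hpoint : ∀ x ∈ T, G₁ x * H₁ x ≤ ∫ w, G' (x, w) * H' (x, w) ∂π := by
      intro x hx
      have := IH μ hP s (fun t => g (Fin.cons (s x) t)) (fun t => h (Fin.cons (s x) t))
        (fun t t' ht => hg (consmono le_rfl ht)) (fun t t' ht => hh (consmono le_rfl ht))
        Cg Ch (fun t => hgb _) (fun t => hhb _) hx.1 hx.2
      exact this
    -- comonotonicity of marginals on T
    have hcom : ∀ a ∈ T, ∀ b ∈ T, 0 ≤ (G₁ a - G₁ b) * (H₁ a - H₁ b) := by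
      intro a ha b hb
      rcases le_total (s a) (s b) with hab | hab
      · have h1 : G₁ a ≤ G₁ b :=
          integral_mono (intbdd ha.1 fun w => hG'b (a, w)) (intbdd hb.1 fun w => hG'b (b, w))
            (fun w => hg (consmono hab le_rfl))
        have h2 : H₁ a ≤ H₁ b :=
          integral_mono (intbdd ha.2 fun w => hH'b (a, w)) (intbdd hb.2 fun w => hH'b (b, w))
            (fun w => hh (consmono hab le_rfl))
        nlinarith
      · have h1 : G₁ b ≤ G₁ a :=
          integral_mono (intbdd hb.1 fun w => hG'b (b, w)) (intbdd ha.1 fun w => hG'b (a, w))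
            (fun w => hg (consmono hab le_rfl))
        have h2 : H₁ b ≤ H₁ a :=
          integral_mono (intbdd hb.2 fun w => hH'b (b, w)) (intbdd ha.2 fun w => hH'b (a, w))
            (fun w => hh (consmono hab le_rfl))
        nlinarith
    -- Fubini
    have hGH'i : Integrable (fun p => G' p * H' p) (μ.prod π) :=
      intbdd (hG'm.mul hH'm) hGH'b
    have hfub : ∫ p, G' p * H' p ∂(μ.prod π) =
        ∫ x, ∫ w, G' (x, w) * H' (x, w) ∂π ∂μ := integral_prod _ hGH'i
    have hfubG : ∫ p, G' p ∂(μ.prod π) = ∫ x, G₁ x ∂μ :=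
      integral_prod _ (intbdd hG'm hG'b)
    have hfubH : ∫ p, H' p ∂(μ.prod π) = ∫ x, H₁ x ∂μ :=
      integral_prod _ (intbdd hH'm hH'b)
    have hinner_m : AEStronglyMeasurable (fun x => ∫ w, G' (x, w) * H' (x, w) ∂π) μ :=
      (hG'm.mul hH'm).integral_prod_right'
    have hinner_b : ∀ x, |∫ w, G' (x, w) * H' (x, w) ∂π| ≤ Cg * Ch :=
      fun x => bdd_int _ _ fun w => hGH'b (x, w)
    have hstep1 : ∫ x, G₁ x * H₁ x ∂μ ≤ ∫ x, ∫ w, G' (x, w) * H' (x, w) ∂π ∂μ := by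
      refine integral_mono_ae (intbdd (hG₁m.mul hH₁m) (Cb := Cg * Ch) ?_)
        (intbdd hinner_m hinner_b) ?_
      · intro x
        rw [abs_mul]
        exact mul_le_mul (hG₁b x) (hH₁b x) (abs_nonneg _) hCg0
      · filter_upwards [hT] with x hx
        exact hpoint x hx
    have hstep2 : (∫ x, G₁ x ∂μ) * (∫ x, H₁ x ∂μ) ≤ ∫ x, G₁ x * H₁ x ∂μ :=
      cheb μ G₁ H₁ Cg Ch hG₁b hH₁b hG₁m hH₁m T hT hcom
    rw [intG, intH, intGH, hfub, hfubG, hfubH]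
    exact hstep2.trans hstep1

private lemma clamp_abs_le (a : ℝ) (n : ℕ) : |max (min a n) (-(n : ℝ))| ≤ |a| := by
  rw [abs_le]
  constructor
  · refine le_max_of_le_left (le_min (neg_abs_le a) ?_)
    exact le_trans (neg_nonpos.2 (abs_nonneg a)) (Nat.cast_nonneg n)
  · refine max_le ((min_le_left _ _).trans (le_abs_self a)) ?_
    exact le_trans (neg_nonpos.2 (Nat.cast_nonneg n)) (abs_nonneg a)

private lemma clamp_tendsto (a : ℝ) :
    Filter.Tendsto (fun n : ℕ => max (min a n) (-(n : ℝ))) Filter.atTop (nhds a) := by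
  have hev : ∀ᶠ n : ℕ in Filter.atTop, max (min a n) (-(n : ℝ)) = a := by
    rw [Filter.eventually_atTop]
    refine ⟨⌈|a|⌉₊, fun n hn => ?_⟩
    have h1 : |a| ≤ (n : ℝ) := le_trans (Nat.le_ceil _) (Nat.cast_le.2 hn)
    rw [min_eq_left (le_trans (le_abs_self a) h1),
      max_eq_left (le_trans (neg_le_neg h1) (neg_abs_le a))]
  exact Filter.Tendsto.congr' (hev.mono fun n hn => hn.symm) tendsto_const_nhds

private lemma harris_main {X : Type*} [MeasurableSpace X] (k : ℕ) (μ : Measure X)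
    [IsProbabilityMeasure μ] (s : X → ℝ) (g h : (Fin k → ℝ) → ℝ)
    (hg : Monotone g) (hh : Monotone h) (hh0 : ∀ t, 0 ≤ h t)
    (hgi : Integrable (fun v : Fin k → X => g fun i => s (v i)) (Measure.pi fun _ => μ))
    (hhi : Integrable (fun v : Fin k → X => h fun i => s (v i)) (Measure.pi fun _ => μ))
    (hghi : Integrable (fun v : Fin k → X => (g fun i => s (v i)) * (h fun i => s (v i)))
      (Measure.pi fun _ => μ)) :
    (∫ v, g (fun i => s (v i)) ∂(Measure.pi fun _ : Fin k => μ)) *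
        (∫ v, h (fun i => s (v i)) ∂(Measure.pi fun _ : Fin k => μ)) ≤
      ∫ v, (g fun i => s (v i)) * (h fun i => s (v i)) ∂(Measure.pi fun _ : Fin k => μ) := by
  set π : Measure (Fin k → X) := Measure.pi fun _ => μ with hπ
  set G : (Fin k → X) → ℝ := fun v => g fun i => s (v i) with hG
  set H : (Fin k → X) → ℝ := fun v => h fun i => s (v i) with hH
  set gn : ℕ → (Fin k → ℝ) → ℝ := fun n t => max (min (g t) n) (-(n : ℝ)) with hgn
  set hn : ℕ → (Fin k → ℝ) → ℝ := fun n t => max (min (h t) n) (-(n : ℝ)) with hhn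
  have hgnmono : ∀ n, Monotone (gn n) :=
    fun n => ((hg.min monotone_const).max monotone_const)
  have hhnmono : ∀ n, Monotone (hn n) :=
    fun n => ((hh.min monotone_const).max monotone_const)
  have hgnb : ∀ n t, |gn n t| ≤ (n : ℝ) := by
    intro n t
    rw [abs_le]
    exact ⟨le_max_right _ _, max_le ((min_le_right _ _)) (le_trans
      (neg_nonpos.2 (Nat.cast_nonneg n)) (Nat.cast_nonneg n))⟩
  have hhnb : ∀ n t, |hn n t| ≤ (n : ℝ) := by
    intro n t
    rw [abs_le]
    exact ⟨le_max_right _ _, max_le ((min_le_right _ _)) (le_trans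
      (neg_nonpos.2 (Nat.cast_nonneg n)) (Nat.cast_nonneg n))⟩
  have hclamp_cont : ∀ n : ℕ, Continuous fun r : ℝ => max (min r n) (-(n : ℝ)) :=
    fun n => (continuous_id.min continuous_const).max continuous_const
  have hgnm : ∀ n, AEStronglyMeasurable (fun v : Fin k → X => gn n fun i => s (v i)) π :=
    fun n => (hclamp_cont n).comp_aestronglyMeasurable hgi.1
  have hhnm : ∀ n, AEStronglyMeasurable (fun v : Fin k → X => hn n fun i => s (v i)) π :=
    fun n => (hclamp_cont n).comp_aestronglyMeasurable hhi.1
  have hineq : ∀ n : ℕ,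
      (∫ v, gn n (fun i => s (v i)) ∂π) * (∫ v, hn n (fun i => s (v i)) ∂π) ≤
        ∫ v, (gn n fun i => s (v i)) * (hn n fun i => s (v i)) ∂π :=
    fun n => harris_bdd k μ inferInstance s (gn n) (hn n) (hgnmono n) (hhnmono n)
      (n : ℝ) (n : ℝ) (hgnb n) (hhnb n) (hgnm n) (hhnm n)
  have htg : Filter.Tendsto (fun n : ℕ => ∫ v, gn n (fun i => s (v i)) ∂π)
      Filter.atTop (nhds (∫ v, G v ∂π)) := by
    refine tendsto_integral_of_dominated_convergence (fun v => |G v|) hgnm hgi.abs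
      (fun n => Filter.Eventually.of_forall fun v => ?_)
      (Filter.Eventually.of_forall fun v => ?_)
    · simpa using clamp_abs_le (G v) n
    · exact clamp_tendsto (G v)
  have hth : Filter.Tendsto (fun n : ℕ => ∫ v, hn n (fun i => s (v i)) ∂π)
      Filter.atTop (nhds (∫ v, H v ∂π)) := by
    refine tendsto_integral_of_dominated_convergence (fun v => |H v|) hhnm hhi.abs
      (fun n => Filter.Eventually.of_forall fun v => ?_)
      (Filter.Eventually.of_forall fun v => ?_)
    · simpa using clamp_abs_le (H v) n
    · exact clamp_tendsto (H v)
  have htgh : Filter.Tendsto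
      (fun n : ℕ => ∫ v, (gn n fun i => s (v i)) * (hn n fun i => s (v i)) ∂π)
      Filter.atTop (nhds (∫ v, G v * H v ∂π)) := by
    refine tendsto_integral_of_dominated_convergence (fun v => |G v * H v|)
      (fun n => (hgnm n).mul (hhnm n)) hghi.abs
      (fun n => Filter.Eventually.of_forall fun v => ?_)
      (Filter.Eventually.of_forall fun v => ?_)
    · have h1 := clamp_abs_le (G v) n
      have h2 := clamp_abs_le (H v) n
      simpa [abs_mul] using mul_le_mul h1 h2 (abs_nonneg _) (abs_nonneg _)
    · exact (clamp_tendsto (G v)).mul (clamp_tendsto (H v))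
  exact le_of_tendsto_of_tendsto' (htg.mul hth) htgh hineq

/-- Hard-negative CL loss dominates CL loss: tilting the conditionally-i.i.d.
negative sampling distribution by a hardening function `η` (non-negative,
argument-wise non-decreasing, with positive finite normalization `γ`) cannot
decrease the expected CL loss for argument-wise non-decreasing `ψ`:
`L_HSCL(f) ≥ L_SCL(f)`. Here `w = (x, x⁺, y)` has joint law `ρ` and the
reference negatives are i.i.d. `p⁻(·|y)` given `w`. -/
theorem stmt_12 {k d C : ℕ} {X : Type*} [MeasurableSpace X]
    (ψ : (Fin k → ℝ) → ℝ) (hmono : Monotone ψ)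
    (η : (Fin k → ℝ) → ℝ) (hη0 : ∀ t, 0 ≤ η t) (hηmono : Monotone η)
    (ρ : Measure (X × X × Fin C)) [IsProbabilityMeasure ρ]
    (pneg : Fin C → Measure X) [∀ y, IsProbabilityMeasure (pneg y)]
    (f : X → EuclideanSpace ℝ (Fin d))
    (γ : X → Fin C → ℝ)
    (hγ : ∀ x y, γ x y =
      ∫ xneg, η (fun i => ⟪f x, f (xneg i)⟫) ∂(Measure.pi fun _ : Fin k => pneg y))
    (hγpos : ∀ x y, 0 < γ x y)
    (hηint : ∀ x y, Integrable (fun xneg : Fin k → X => η fun i => ⟪f x, f (xneg i)⟫)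
      (Measure.pi fun _ : Fin k => pneg y))
    (hψint : ∀ w : X × X × Fin C,
      Integrable (fun xneg : Fin k → X => ψ fun i => ⟪f w.1, f (xneg i) - f w.2.1⟫)
        (Measure.pi fun _ : Fin k => pneg w.2.2))
    (hψηint : ∀ w : X × X × Fin C,
      Integrable (fun xneg : Fin k → X =>
          (ψ fun i => ⟪f w.1, f (xneg i) - f w.2.1⟫) *
            (η fun i => ⟪f w.1, f (xneg i)⟫))
        (Measure.pi fun _ : Fin k => pneg w.2.2))
    (houter₁ : Integrable (fun w : X × X × Fin C =>
      ∫ xneg, (ψ fun i => ⟪f w.1, f (xneg i) - f w.2.1⟫) *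
          (η (fun i => ⟪f w.1, f (xneg i)⟫) / γ w.1 w.2.2)
        ∂(Measure.pi fun _ : Fin k => pneg w.2.2)) ρ)
    (houter₂ : Integrable (fun w : X × X × Fin C =>
      ∫ xneg, ψ (fun i => ⟪f w.1, f (xneg i) - f w.2.1⟫)
        ∂(Measure.pi fun _ : Fin k => pneg w.2.2)) ρ) :
    ∫ w, (∫ xneg, (ψ fun i => ⟪f w.1, f (xneg i) - f w.2.1⟫) *
          (η (fun i => ⟪f w.1, f (xneg i)⟫) / γ w.1 w.2.2)
        ∂(Measure.pi fun _ : Fin k => pneg w.2.2)) ∂ρ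
      ≥ ∫ w, (∫ xneg, ψ (fun i => ⟪f w.1, f (xneg i) - f w.2.1⟫)
          ∂(Measure.pi fun _ : Fin k => pneg w.2.2)) ∂ρ := by
  refine le_trans (le_of_eq rfl) (integral_mono houter₂ houter₁ fun w => ?_)
  obtain ⟨x, xp, y⟩ := w
  set π : Measure (Fin k → X) := Measure.pi fun _ : Fin k => pneg y with hπ
  set s : X → ℝ := fun z => ⟪f x, f z⟫ with hs
  set g : (Fin k → ℝ) → ℝ := fun t => ψ fun i => t i - ⟪f x, f xp⟫ with hg
  have hgmono : Monotone g := fun t t' ht => hmono fun i => sub_le_sub_right (ht i) _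
  have hGeq : (fun v : Fin k → X => ψ fun i => ⟪f x, f (v i) - f xp⟫) =
      fun v => g fun i => s (v i) := by
    funext v
    show ψ _ = ψ _
    congr 1
    funext i
    exact inner_sub_right _ _ _
  have hψi : Integrable (fun v : Fin k → X => g fun i => s (v i)) π := by
    rw [← hGeq]; exact hψint ⟨x, xp, y⟩
  have hψηi : Integrable
      (fun v : Fin k → X => (g fun i => s (v i)) * (η fun i => s (v i))) π := by
    have h1 := hψηint ⟨x, xp, y⟩
    have h2 : (fun v : Fin k → X =>
        (ψ fun i => ⟪f x, f (v i) - f xp⟫) * (η fun i => ⟪f x, f (v i)⟫)) =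
        fun v : Fin k → X => (g fun i => s (v i)) * (η fun i => s (v i)) := by
      funext v
      congr 1
      show ψ _ = ψ _
      congr 1
      funext i
      exact inner_sub_right _ _ _
    rw [← h2]; exact h1
  have key := harris_main k (pneg y) s g η hgmono hηmono hη0 hψi (hηint x y) hψηi
  show (∫ v, ψ (fun i => ⟪f x, f (v i) - f xp⟫) ∂π) ≤
    ∫ v, (ψ fun i => ⟪f x, f (v i) - f xp⟫) * (η (fun i => ⟪f x, f (v i)⟫) / γ x y) ∂π
  rw [hGeq]
  have hdiv : (fun v : Fin k → X =>
      (g fun i => s (v i)) * (η (fun i => s (v i)) / γ x y)) =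
      fun v : Fin k → X => ((g fun i => s (v i)) * η fun i => s (v i)) / γ x y := by
    funext v; ring
  calc (∫ v, g (fun i => s (v i)) ∂π)
      ≤ (∫ v, (g fun i => s (v i)) * (η fun i => s (v i)) ∂π) / γ x y := by
        rw [le_div_iff₀ (hγpos x y)]
        calc (∫ v, g (fun i => s (v i)) ∂π) * γ x y
            = (∫ v, g (fun i => s (v i)) ∂π) * ∫ v, η (fun i => s (v i)) ∂π := by
              rw [hγ x y]
          _ ≤ _ := key
    _ = ∫ v, (g fun i => s (v i)) * (η (fun i => s (v i)) / γ x y) ∂π := by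
        rw [hdiv, integral_div]
    _ = ∫ v, (ψ fun i => ⟪f x, f (v i) - f xp⟫) * (η (fun i => ⟪f x, f (v i)⟫) / γ x y) ∂π := by
        refine integral_congr_ae (Filter.Eventually.of_forall fun v => ?_)
        have h1 : ψ (fun i => ⟪f x, f (v i) - f xp⟫) = g fun i => s (v i) :=
          congrFun hGeq v
        show (g fun i => s (v i)) * (η (fun i => s (v i)) / γ x y) =
          (ψ fun i => ⟪f x, f (v i) - f xp⟫) * (η (fun i => ⟪f x, f (v i)⟫) / γ x y)
        rw [h1]
end

section
/- (UCL loss lower bound) In the UCL model with C equiprobable latent classes, unit-ball representations, anchor and positive conditionally independent given their common latent label y with common conditional distribution s(·|y), and k negatives i.i.d. from the marginal mixture (1/C)∑_j s(·|j) independent of (x, x^+), if ψ_k is convex and argument-wise non-decreasing, then L^{(k)}_{UCL}(f) ≥ (1/C^{k+1}) ∑_{y, y_1^-, ..., y_k^- ∈ {1,...,C}} ψ_k(−C·1(y_1^-≠y)/(C−1), ..., −C·1(y_k^-≠y)/(C−1)) for all representation maps f into the closed unit ball. -/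
open MeasureTheory Finset
open scoped RealInnerProductSpace BigOperators

private lemma integrable_bound' {α β : Type*} [MeasurableSpace α] [NormedAddCommGroup β]
    (μ : Measure α) [IsFiniteMeasure μ] {h : α → β} (hm : AEStronglyMeasurable h μ) (B : ℝ)
    (hb : ∀ a, ‖h a‖ ≤ B) : Integrable h μ :=
  (integrable_const B).mono' hm (Filter.Eventually.of_forall hb)

private lemma pi_map_eval_aux' {ι : Type*} [Fintype ι] [DecidableEq ι] {α : ι → Type*}
    [∀ i, MeasurableSpace (α i)] (μ : ∀ i, Measure (α i)) [∀ i, IsProbabilityMeasure (μ i)]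
    (i : ι) : (Measure.pi μ).map (Function.eval i) = μ i := by
  ext A hA
  rw [Measure.map_apply (measurable_pi_apply i) hA, Set.eval_preimage, Measure.pi_pi,
    Fintype.prod_eq_single i (fun j hj => by simp [Function.update_of_ne hj])]
  simp

private lemma jensen_step {k d C : ℕ} {X : Type*} [MeasurableSpace X]
    (ψ : (Fin k → ℝ) → ℝ) (hconv : ConvexOn ℝ Set.univ ψ)
    (s : Fin C → Measure X) [∀ j, IsProbabilityMeasure (s j)]
    (f : X → EuclideanSpace ℝ (Fin d)) (hf : Measurable f) (hball : ∀ x, ‖f x‖ ≤ 1)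
    (y : Fin C) (t : Fin k → Fin C)
    (hψint : Integrable (fun z : X × X × (Fin k → X) =>
          ψ fun i => ⟪f z.1, f (z.2.2 i) - f z.2.1⟫)
        ((s y).prod ((s y).prod (Measure.pi fun i => s (t i))))) :
    ψ (fun i => ⟪∫ x, f x ∂(s y), ∫ x, f x ∂(s (t i))⟫ - ⟪∫ x, f x ∂(s y), ∫ x, f x ∂(s y)⟫)
      ≤ ∫ z, ψ (fun i => ⟪f z.1, f (z.2.2 i) - f z.2.1⟫)
          ∂((s y).prod ((s y).prod (Measure.pi fun i => s (t i)))) := by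
  classical
  set piμ := (Measure.pi fun i => s (t i)) with hpiμ
  set π := (s y).prod ((s y).prod piμ) with hπ
  set g : X × X × (Fin k → X) → Fin k → ℝ := fun z i => ⟪f z.1, f (z.2.2 i) - f z.2.1⟫ with hg
  have hfae : ∀ j, Integrable f (s j) := fun j =>
    integrable_bound' _ hf.aestronglyMeasurable 1 hball
  have hbnd : ∀ (z : X × X × (Fin k → X)) (i : Fin k), ‖g z i‖ ≤ 2 := by
    intro z i
    have h1 := abs_real_inner_le_norm (f z.1) (f (z.2.2 i) - f z.2.1)
    have h2 : ‖f (z.2.2 i) - f z.2.1‖ ≤ 2 := by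
      calc ‖f (z.2.2 i) - f z.2.1‖ ≤ ‖f (z.2.2 i)‖ + ‖f z.2.1‖ := norm_sub_le _ _
        _ ≤ 2 := by have := hball (z.2.2 i); have := hball z.2.1; linarith
    calc ‖g z i‖ = |⟪f z.1, f (z.2.2 i) - f z.2.1⟫| := rfl
      _ ≤ ‖f z.1‖ * ‖f (z.2.2 i) - f z.2.1‖ := h1
      _ ≤ 1 * 2 := mul_le_mul (hball z.1) h2 (norm_nonneg _) zero_le_one
      _ = 2 := by norm_num
  have hgm : Measurable g := measurable_pi_lambda _ fun i =>
    (hf.comp measurable_fst).inner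
      ((hf.comp ((measurable_pi_apply i).comp (measurable_snd.comp measurable_snd))).sub
        (hf.comp (measurable_fst.comp measurable_snd)))
  have hgi : Integrable g π := integrable_bound' _ hgm.aestronglyMeasurable 2 fun z =>
    (pi_norm_le_iff_of_nonneg (by norm_num)).mpr (hbnd z)
  have hJ := hconv.map_integral_le (μ := π) (f := g)
    (by simpa using hconv.continuousOn_interior) isClosed_univ
    (Filter.Eventually.of_forall fun z => Set.mem_univ _) hgi
    (by simpa [Function.comp_def, hg] using hψint)
  have key : (∫ z, g z ∂π)
      = fun i => ⟪∫ x, f x ∂(s y), ∫ x, f x ∂(s (t i))⟫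
          - ⟪∫ x, f x ∂(s y), ∫ x, f x ∂(s y)⟫ := by
    funext i
    have hproj := (ContinuousLinearMap.proj (R := ℝ) (φ := fun _ : Fin k => ℝ) i).integral_comp_comm hgi
    have hproj' : (∫ z, g z ∂π) i = ∫ z, g z i ∂π := by
      simpa [ContinuousLinearMap.proj_apply] using hproj.symm
    rw [hproj']
    -- measurability and integrability of the two pieces
    have m1 : Measurable fun z : X × X × (Fin k → X) => ⟪f z.1, f (z.2.2 i)⟫ :=
      (hf.comp measurable_fst).inner
        (hf.comp ((measurable_pi_apply i).comp (measurable_snd.comp measurable_snd)))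
    have m2 : Measurable fun z : X × X × (Fin k → X) => ⟪f z.1, f z.2.1⟫ :=
      (hf.comp measurable_fst).inner (hf.comp (measurable_fst.comp measurable_snd))
    have bnd1 : ∀ (a b : X), ‖(⟪f a, f b⟫ : ℝ)‖ ≤ 1 := by
      intro a b
      calc ‖(⟪f a, f b⟫ : ℝ)‖ = |(⟪f a, f b⟫ : ℝ)| := rfl
        _ ≤ ‖f a‖ * ‖f b‖ := abs_real_inner_le_norm _ _
        _ ≤ 1 * 1 := mul_le_mul (hball a) (hball b) (norm_nonneg _) zero_le_one
        _ = 1 := by norm_num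
    have i1 : Integrable (fun z : X × X × (Fin k → X) => ⟪f z.1, f (z.2.2 i)⟫) π :=
      integrable_bound' _ m1.aestronglyMeasurable 1 fun z => bnd1 _ _
    have i2 : Integrable (fun z : X × X × (Fin k → X) => ⟪f z.1, f z.2.1⟫) π :=
      integrable_bound' _ m2.aestronglyMeasurable 1 fun z => bnd1 _ _
    have hsplit : ∫ z, g z i ∂π
        = (∫ z, ⟪f z.1, f (z.2.2 i)⟫ ∂π) - ∫ z, ⟪f z.1, f z.2.1⟫ ∂π := by
      rw [← integral_sub i1 i2]
      refine integral_congr_ae (Filter.Eventually.of_forall fun z => ?_)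
      simp [hg, inner_sub_right]
    rw [hsplit]
    -- compute the two integrals
    have hpi_int : ∀ v : EuclideanSpace ℝ (Fin d),
        ∫ xs : Fin k → X, ⟪v, f (xs i)⟫ ∂piμ = ⟪v, ∫ x, f x ∂(s (t i))⟫ := by
      intro v
      have hmv : AEStronglyMeasurable (fun u : X => (⟪v, f u⟫ : ℝ))
          (piμ.map (Function.eval i)) := by
        rw [hpiμ, pi_map_eval_aux']
        exact (measurable_const.inner hf).aestronglyMeasurable
      have := integral_map (μ := piμ) (φ := Function.eval i)
        (measurable_pi_apply i).aemeasurable hmv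
      rw [hpiμ] at this ⊢
      rw [show (fun xs : Fin k → X => (⟪v, f (xs i)⟫ : ℝ))
            = fun xs : Fin k → X => ⟪v, f (Function.eval i xs)⟫ from rfl, ← this,
        pi_map_eval_aux', integral_inner (hfae (t i)) v]
    have A1 : ∫ z, ⟪f z.1, f (z.2.2 i)⟫ ∂π
        = ⟪∫ x, f x ∂(s y), ∫ x, f x ∂(s (t i))⟫ := by
      rw [hπ, integral_prod _ i1]
      have inner_eq : ∀ x : X,
          (∫ w : X × (Fin k → X), ⟪f x, f (w.2 i)⟫ ∂((s y).prod piμ))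
            = ⟪f x, ∫ u, f u ∂(s (t i))⟫ := by
        intro x
        have mx : Measurable fun w : X × (Fin k → X) => (⟪f x, f (w.2 i)⟫ : ℝ) :=
          measurable_const.inner (hf.comp ((measurable_pi_apply i).comp measurable_snd))
        have ix : Integrable (fun w : X × (Fin k → X) => (⟪f x, f (w.2 i)⟫ : ℝ))
            ((s y).prod piμ) :=
          integrable_bound' _ mx.aestronglyMeasurable 1 fun w => bnd1 _ _
        rw [integral_prod _ ix]
        simp only [hpi_int (f x)]
        simp
      dsimp only
      rw [MeasureTheory.integral_congr_ae (Filter.Eventually.of_forall (fun x => inner_eq x))]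
      have hrc : ∀ x : X, (⟪f x, ∫ u, f u ∂(s (t i))⟫ : ℝ) = ⟪∫ u, f u ∂(s (t i)), f x⟫ :=
        fun x => real_inner_comm _ _
      rw [MeasureTheory.integral_congr_ae (Filter.Eventually.of_forall hrc),
        integral_inner (hfae y), real_inner_comm]
    have A2 : ∫ z, ⟪f z.1, f z.2.1⟫ ∂π = ⟪∫ x, f x ∂(s y), ∫ x, f x ∂(s y)⟫ := by
      rw [hπ, integral_prod _ i2]
      have inner_eq : ∀ x : X,
          (∫ w : X × (Fin k → X), ⟪f x, f w.1⟫ ∂((s y).prod piμ))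
            = ⟪f x, ∫ u, f u ∂(s y)⟫ := by
        intro x
        have mx : Measurable fun w : X × (Fin k → X) => (⟪f x, f w.1⟫ : ℝ) :=
          measurable_const.inner (hf.comp measurable_fst)
        have ix : Integrable (fun w : X × (Fin k → X) => (⟪f x, f w.1⟫ : ℝ))
            ((s y).prod piμ) :=
          integrable_bound' _ mx.aestronglyMeasurable 1 fun w => bnd1 _ _
        rw [integral_prod _ ix]
        have : ∀ x' : X, (∫ _xs : Fin k → X, (⟪f x, f x'⟫ : ℝ) ∂piμ) = ⟪f x, f x'⟫ := by
          intro x'; simp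
        simp only [this]
        rw [integral_inner (hfae y)]
      dsimp only
      rw [MeasureTheory.integral_congr_ae (Filter.Eventually.of_forall (fun x => inner_eq x))]
      have hrc : ∀ x : X, (⟪f x, ∫ u, f u ∂(s y)⟫ : ℝ) = ⟪∫ u, f u ∂(s y), f x⟫ :=
        fun x => real_inner_comm _ _
      rw [MeasureTheory.integral_congr_ae (Filter.Eventually.of_forall hrc),
        integral_inner (hfae y), real_inner_comm]
    rw [A1, A2]
  calc ψ (fun i => ⟪∫ x, f x ∂(s y), ∫ x, f x ∂(s (t i))⟫ - ⟪∫ x, f x ∂(s y), ∫ x, f x ∂(s y)⟫)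
      = ψ (∫ z, g z ∂π) := by rw [key]
    _ ≤ ∫ z, ψ (g z) ∂π := hJ
    _ = ∫ z, ψ (fun i => ⟪f z.1, f (z.2.2 i) - f z.2.1⟫) ∂π := rfl

private lemma sum_piFinset_eval {k C : ℕ} (S : Fin k → Finset (Fin C)) (i₀ : Fin k)
    (h : Fin C → ℝ) :
    ∑ t ∈ Fintype.piFinset S, h (t i₀)
      = (∑ j ∈ S i₀, h j) * ∏ i ∈ Finset.univ.erase i₀, ((S i).card : ℝ) := by
  have h1 : ∀ t : Fin k → Fin C, (∏ i : Fin k, if i = i₀ then h (t i) else 1) = h (t i₀) := by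
    intro t
    rw [Finset.prod_ite_eq' Finset.univ i₀ (fun i => h (t i))]
    simp
  calc ∑ t ∈ Fintype.piFinset S, h (t i₀)
      = ∑ t ∈ Fintype.piFinset S, ∏ i : Fin k, (if i = i₀ then h (t i) else 1) :=
        Finset.sum_congr rfl fun t _ => (h1 t).symm
    _ = ∏ i : Fin k, ∑ j ∈ S i, (if i = i₀ then h j else 1) :=
        (Finset.prod_univ_sum S (fun i x => if i = i₀ then h x else 1)).symm
    _ = (∑ j ∈ S i₀, h j) * ∏ i ∈ Finset.univ.erase i₀, ((S i).card : ℝ) := by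
        rw [← Finset.mul_prod_erase Finset.univ _ (Finset.mem_univ i₀)]
        congr 1
        · simp
        · refine Finset.prod_congr rfl fun i hi => ?_
          have hne : i ≠ i₀ := (Finset.mem_erase.mp hi).1
          simp [hne]

private lemma fiber_decomp {k C : ℕ} {M : Type*} [AddCommMonoid M] (p : Fin k → Bool)
    (g : Fin C × (Fin k → Fin C) → M) :
    ∑ yt ∈ Finset.univ.filter
        (fun yt : Fin C × (Fin k → Fin C) => (fun i => decide (yt.2 i = yt.1)) = p), g yt
      = ∑ y : Fin C, ∑ t ∈ Fintype.piFinset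
          (fun i => if p i then ({y} : Finset (Fin C)) else {y}ᶜ), g (y, t) := by
  classical
  rw [Finset.sum_filter, Fintype.sum_prod_type]
  refine Finset.sum_congr rfl fun y _ => ?_
  rw [← Finset.sum_filter]
  refine Finset.sum_congr ?_ fun t _ => rfl
  ext t
  simp only [Finset.mem_filter, Finset.mem_univ, true_and, Fintype.mem_piFinset, funext_iff]
  refine forall_congr' fun i => ?_
  cases hp : p i <;> simp [hp, Finset.mem_compl]

set_option maxHeartbeats 1000000 in
private lemma fiber_step {k C d : ℕ} (hC : 2 ≤ C)
    (ψ : (Fin k → ℝ) → ℝ) (hconv : ConvexOn ℝ Set.univ ψ) (hmono : Monotone ψ)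
    (μv : Fin C → EuclideanSpace ℝ (Fin d)) (hμn : ∀ j, ‖μv j‖ ≤ 1) :
    ∑ y : Fin C, ∑ t : Fin k → Fin C,
        ψ (fun i => if t i ≠ y then -(C:ℝ)/((C:ℝ)-1) else 0)
      ≤ ∑ y : Fin C, ∑ t : Fin k → Fin C,
        ψ (fun i => ⟪μv y, μv (t i)⟫ - ⟪μv y, μv y⟫) := by
  classical
  have hCr2 : (2:ℝ) ≤ (C:ℝ) := by exact_mod_cast hC
  set Cr : ℝ := (C : ℝ) with hCrdef
  set c : Fin C × (Fin k → Fin C) → Fin k → ℝ :=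
    fun yt i => ⟪μv yt.1, μv (yt.2 i)⟫ - ⟪μv yt.1, μv yt.1⟫ with hc
  set b : Fin C × (Fin k → Fin C) → Fin k → ℝ :=
    fun yt i => if yt.2 i ≠ yt.1 then -Cr/(Cr-1) else 0 with hb
  have hprod : ∀ (F : Fin C × (Fin k → Fin C) → ℝ),
      (∑ y : Fin C, ∑ t : Fin k → Fin C, F (y, t))
        = ∑ p : Fin k → Bool, ∑ yt ∈ Finset.univ.filter
            (fun yt : Fin C × (Fin k → Fin C) => (fun i => decide (yt.2 i = yt.1)) = p), F yt := by
    intro F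
    rw [← Fintype.sum_prod_type]
    exact (Finset.sum_fiberwise Finset.univ
      (fun yt : Fin C × (Fin k → Fin C) => (fun i => decide (yt.2 i = yt.1))) F).symm
  -- global quantities
  set Q : ℝ := ∑ y : Fin C, ∑ j : Fin C, ⟪μv y, μv j⟫ with hQdef
  set R : ℝ := ∑ y : Fin C, ⟪μv y, μv y⟫ with hRdef
  have hQ : 0 ≤ Q := by
    have h1 : Q = ⟪∑ j : Fin C, μv j, ∑ j : Fin C, μv j⟫ := by
      rw [hQdef, sum_inner]
      exact Finset.sum_congr rfl fun y _ => (inner_sum _ _ _).symm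
    rw [h1]
    exact real_inner_self_nonneg
  have hR : R ≤ Cr := by
    rw [hRdef]
    calc ∑ y : Fin C, ⟪μv y, μv y⟫ ≤ ∑ _y : Fin C, (1:ℝ) := by
          refine Finset.sum_le_sum fun y _ => ?_
          rw [real_inner_self_eq_norm_mul_norm]
          have := hμn y
          nlinarith [norm_nonneg (μv y)]
      _ = Cr := by simp [hCrdef]
  calc ∑ y : Fin C, ∑ t : Fin k → Fin C,
        ψ (fun i => if t i ≠ y then -(C:ℝ)/((C:ℝ)-1) else 0)
      = ∑ p : Fin k → Bool, ∑ yt ∈ Finset.univ.filter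
          (fun yt : Fin C × (Fin k → Fin C) => (fun i => decide (yt.2 i = yt.1)) = p),
          ψ (b yt) := hprod (fun yt => ψ (b yt))
    _ ≤ ∑ p : Fin k → Bool, ∑ yt ∈ Finset.univ.filter
          (fun yt : Fin C × (Fin k → Fin C) => (fun i => decide (yt.2 i = yt.1)) = p),
          ψ (c yt) := ?_
    _ = ∑ y : Fin C, ∑ t : Fin k → Fin C,
          ψ (fun i => ⟪μv y, μv (t i)⟫ - ⟪μv y, μv y⟫) := (hprod (fun yt => ψ (c yt))).symm
  refine Finset.sum_le_sum fun p _ => ?_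
  set F := Finset.univ.filter
      (fun yt : Fin C × (Fin k → Fin C) => (fun i => decide (yt.2 i = yt.1)) = p) with hF
  set S : Fin C → Fin k → Finset (Fin C) :=
    fun y i => if p i then ({y} : Finset (Fin C)) else {y}ᶜ with hS
  have hcards : ∀ y i, ((S y i).card : ℝ) = if p i then 1 else Cr - 1 := by
    intro y i
    cases hp : p i <;>
      simp [hS, hp, Finset.card_compl, Fintype.card_fin, hCrdef,
        Nat.cast_sub (le_trans one_le_two hC)]
  have hmem : ∀ yt ∈ F, ∀ i : Fin k, (yt.2 i = yt.1) ↔ p i = true := by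
    intro yt hyt i
    have h2 : decide (yt.2 i = yt.1) = p i := congrFun (Finset.mem_filter.mp hyt).2 i
    rw [← h2]
    simp
  set bp : Fin k → ℝ := fun i => if p i then 0 else -Cr/(Cr-1) with hbp
  have hbF : ∀ yt ∈ F, b yt = bp := by
    intro yt hyt
    funext i
    by_cases hp : p i = true
    · have h3 : yt.2 i = yt.1 := (hmem yt hyt i).mpr hp
      simp [hb, hbp, hp, h3]
    · have h3 : ¬ (yt.2 i = yt.1) := fun h => hp ((hmem yt hyt i).mp h)
      simp [hb, hbp, hp, h3]
  -- cardinality of the fiber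
  have hcardeq : (F.card : ℝ) = Cr * ∏ i : Fin k, (if p i then (1:ℝ) else Cr - 1) := by
    have hns : (F.card : ℝ) = ∑ yt ∈ F, (1:ℝ) := by simp
    rw [hns, hF, fiber_decomp p (fun _ => (1:ℝ))]
    have h1 : ∀ y : Fin C, (∑ _t ∈ Fintype.piFinset
        (fun i => if p i then ({y} : Finset (Fin C)) else {y}ᶜ), (1:ℝ))
        = ∏ i : Fin k, (if p i then (1:ℝ) else Cr - 1) := by
      intro y
      rw [Finset.sum_const, Fintype.card_piFinset, nsmul_eq_mul, mul_one]
      push_cast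
      exact Finset.prod_congr rfl fun i _ => hcards y i
    rw [Finset.sum_congr rfl fun y _ => h1 y, Finset.sum_const, Finset.card_univ,
      Fintype.card_fin, nsmul_eq_mul]
  have hprodpos : (0:ℝ) < ∏ i : Fin k, (if p i then (1:ℝ) else Cr - 1) := by
    refine Finset.prod_pos fun i _ => ?_
    split <;> nlinarith
  have hcardpos : (0:ℝ) < (F.card : ℝ) := by
    rw [hcardeq]
    exact mul_pos (by nlinarith) hprodpos
  -- Jensen over the fiber
  have hwsum : (0:ℝ) < ∑ _yt ∈ F, (1:ℝ) := by simpa using hcardpos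
  have hJ := hconv.map_centerMass_le (t := F) (w := fun _ => (1:ℝ)) (p := c)
    (fun _ _ => zero_le_one) hwsum (fun _ _ => Set.mem_univ _)
  have hcm : F.centerMass (fun _ => (1:ℝ)) c = (F.card : ℝ)⁻¹ • ∑ yt ∈ F, c yt := by
    simp [Finset.centerMass]
  have hcm2 : F.centerMass (fun _ => (1:ℝ)) (ψ ∘ c) = (F.card : ℝ)⁻¹ * ∑ yt ∈ F, ψ (c yt) := by
    simp [Finset.centerMass, Function.comp]
  have hkey : bp ≤ F.centerMass (fun _ => (1:ℝ)) c := by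
    rw [hcm]
    refine Pi.le_def.mpr fun i => ?_
    have happ : ((F.card : ℝ)⁻¹ • ∑ yt ∈ F, c yt) i
        = (F.card : ℝ)⁻¹ * ∑ yt ∈ F, c yt i := by
      simp [Finset.sum_apply]
    rw [happ]
    by_cases hp : p i = true
    · have hzero : ∀ yt ∈ F, c yt i = 0 := by
        intro yt hyt
        have h3 : yt.2 i = yt.1 := (hmem yt hyt i).mpr hp
        simp [hc, h3]
      rw [Finset.sum_eq_zero hzero]
      simp [hbp, hp]
    · have hpf : p i = false := by simpa using hp
      set N : ℝ := ∏ i' ∈ Finset.univ.erase i, (if p i' then (1:ℝ) else Cr - 1) with hN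
      have hNpos : 0 < N := by
        refine Finset.prod_pos fun i' _ => ?_
        split <;> nlinarith
      have hsum : (∑ yt ∈ F, c yt i) = N * (Q - Cr * R) := by
        rw [hF, fiber_decomp p (fun yt => c yt i)]
        have hy : ∀ y : Fin C, (∑ t ∈ Fintype.piFinset
            (fun i' => if p i' then ({y} : Finset (Fin C)) else {y}ᶜ), c (y, t) i)
            = N * ((∑ j : Fin C, ⟪μv y, μv j⟫) - Cr * ⟪μv y, μv y⟫) := by
          intro y
          have := sum_piFinset_eval (S y) i (fun j => ⟪μv y, μv j⟫ - ⟪μv y, μv y⟫)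
          rw [show (∑ t ∈ Fintype.piFinset
              (fun i' => if p i' then ({y} : Finset (Fin C)) else {y}ᶜ), c (y, t) i)
              = ∑ t ∈ Fintype.piFinset (S y), (fun j => ⟪μv y, μv j⟫ - ⟪μv y, μv y⟫) (t i)
              from rfl, this]
        -- the erase-product equals N and the inner sum computes
          have hprodN : (∏ i' ∈ Finset.univ.erase i, ((S y i').card : ℝ)) = N := by
            rw [hN]
            exact Finset.prod_congr rfl fun i' _ => hcards y i'
          have hSyi : S y i = ({y} : Finset (Fin C))ᶜ := by simp [hS, hpf]
          have hsum2 : (∑ j ∈ S y i, (⟪μv y, μv j⟫ - ⟪μv y, μv y⟫))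
              = (∑ j : Fin C, ⟪μv y, μv j⟫) - Cr * ⟪μv y, μv y⟫ := by
            rw [hSyi, Finset.compl_singleton,
              Finset.sum_erase_eq_sub (Finset.mem_univ y)]
            rw [Finset.sum_sub_distrib, Finset.sum_const, Finset.card_univ, Fintype.card_fin,
              nsmul_eq_mul]
            simp [hCrdef]
          rw [hprodN, hsum2, mul_comm]
        rw [Finset.sum_congr rfl fun y _ => hy y, ← Finset.mul_sum,
          Finset.sum_sub_distrib, ← Finset.mul_sum, ← hQdef, ← hRdef]
      rw [hsum]
      have hbpv : bp i = -Cr/(Cr-1) := by simp [hbp, hpf]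
      rw [hbpv]
      have hcard2 : (F.card : ℝ) = Cr * ((Cr - 1) * N) := by
        rw [hcardeq, hN, ← Finset.mul_prod_erase Finset.univ _ (Finset.mem_univ i), hpf]
        simp
      rw [hcard2]
      have key2 : -Cr^2 ≤ Q - Cr * R := by nlinarith [mul_le_mul_of_nonneg_left hR (by nlinarith : (0:ℝ) ≤ Cr)]
      have h3 : N ≠ 0 := ne_of_gt hNpos
      have h4 : Cr ≠ 0 := ne_of_gt (by nlinarith : (0:ℝ) < Cr)
      have hpos1 : (0:ℝ) < Cr - 1 := by nlinarith
      have h5 : Cr - 1 ≠ 0 := ne_of_gt hpos1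
      have heq : (Cr * ((Cr - 1) * N))⁻¹ * (N * (Q - Cr * R))
          = (Q - Cr * R) / (Cr * (Cr - 1)) := by
        field_simp
      have hpos2 : (0:ℝ) < Cr * (Cr - 1) := by nlinarith
      rw [heq, div_le_div_iff₀ hpos1 hpos2]
      nlinarith [mul_le_mul_of_nonneg_right key2 (le_of_lt hpos1)]
  have hψ1 : ψ bp ≤ (F.card : ℝ)⁻¹ * ∑ yt ∈ F, ψ (c yt) := by
    calc ψ bp ≤ ψ (F.centerMass (fun _ => (1:ℝ)) c) := hmono hkey
      _ ≤ F.centerMass (fun _ => (1:ℝ)) (ψ ∘ c) := hJ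
      _ = (F.card : ℝ)⁻¹ * ∑ yt ∈ F, ψ (c yt) := hcm2
  calc ∑ yt ∈ F, ψ (b yt) = ∑ _yt ∈ F, ψ bp :=
        Finset.sum_congr rfl fun yt hyt => by rw [hbF yt hyt]
    _ = (F.card : ℝ) * ψ bp := by rw [Finset.sum_const, nsmul_eq_mul]
    _ ≤ (F.card : ℝ) * ((F.card : ℝ)⁻¹ * ∑ yt ∈ F, ψ (c yt)) :=
        mul_le_mul_of_nonneg_left hψ1 (le_of_lt hcardpos)
    _ = ∑ yt ∈ F, ψ (c yt) := by
        field_simp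

/-- UCL loss lower bound: with `C` equiprobable latent classes, unit-ball
representations, anchor and positive conditionally i.i.d. `s(·|y)` given the
common latent label `y`, and `k` negatives generated independently by drawing a
uniform latent label and then sampling from `s`, any convex argument-wise
non-decreasing `ψ` satisfies
`L_UCL(f) ≥ (1/C^{k+1}) ∑_{y,y⁻} ψ(−C·1(y⁻_1≠y)/(C−1),...,−C·1(y⁻_k≠y)/(C−1))`. -/
theorem stmt_13 {k d C : ℕ} (hC : 2 ≤ C) {X : Type*} [MeasurableSpace X]
    (ψ : (Fin k → ℝ) → ℝ) (hconv : ConvexOn ℝ Set.univ ψ) (hmono : Monotone ψ)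
    (s : Fin C → Measure X) [∀ j, IsProbabilityMeasure (s j)]
    (f : X → EuclideanSpace ℝ (Fin d)) (hf : Measurable f) (hball : ∀ x, ‖f x‖ ≤ 1)
    (hint : ∀ (y : Fin C) (t : Fin k → Fin C),
      Integrable (fun z : X × X × (Fin k → X) =>
          ψ fun i => ⟪f z.1, f (z.2.2 i) - f z.2.1⟫)
        ((s y).prod ((s y).prod (Measure.pi fun i => s (t i))))) :
    ((C : ℝ) ^ (k + 1))⁻¹ *
        ∑ y : Fin C, ∑ t : Fin k → Fin C,
          ∫ z, ψ (fun i => ⟪f z.1, f (z.2.2 i) - f z.2.1⟫)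
            ∂((s y).prod ((s y).prod (Measure.pi fun i => s (t i))))
      ≥ ((C : ℝ) ^ (k + 1))⁻¹ *
          ∑ y : Fin C, ∑ t : Fin k → Fin C,
            ψ (fun i => if t i ≠ y then -(C : ℝ) / ((C : ℝ) - 1) else 0) := by
  have hμn : ∀ j : Fin C, ‖∫ x, f x ∂(s j)‖ ≤ 1 := by
    intro j
    have hfi : Integrable f (s j) := integrable_bound' _ hf.aestronglyMeasurable 1 hball
    refine (norm_integral_le_integral_norm _).trans ?_
    calc ∫ x, ‖f x‖ ∂(s j) ≤ ∫ _x, (1:ℝ) ∂(s j) :=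
          integral_mono hfi.norm (integrable_const 1) hball
      _ = 1 := by simp
  have hstep1 : ∑ y : Fin C, ∑ t : Fin k → Fin C,
      ψ (fun i => ⟪(fun j => ∫ x, f x ∂(s j)) y, (fun j => ∫ x, f x ∂(s j)) (t i)⟫
        - ⟪(fun j => ∫ x, f x ∂(s j)) y, (fun j => ∫ x, f x ∂(s j)) y⟫)
      ≤ ∑ y : Fin C, ∑ t : Fin k → Fin C,
        ∫ z, ψ (fun i => ⟪f z.1, f (z.2.2 i) - f z.2.1⟫)
          ∂((s y).prod ((s y).prod (Measure.pi fun i => s (t i)))) := by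
    refine Finset.sum_le_sum fun y _ => Finset.sum_le_sum fun t _ => ?_
    exact jensen_step ψ hconv s f hf hball y t (hint y t)
  have hstep2 := fiber_step hC ψ hconv hmono (fun j => ∫ x, f x ∂(s j)) hμn
  rw [ge_iff_le]
  refine mul_le_mul_of_nonneg_left ?_ (by positivity)
  exact le_trans hstep2 hstep1
end

section
/- (Monotonicity of the UCL lower bound in C for k = 1) Let ψ: ℝ → ℝ be convex and non-decreasing and for integer C ≥ 2 define B(C) := (1/C)·((C−1)·ψ(−C/(C−1)) + ψ(0)). Then B(C+1) ≤ B(C) for all C ≥ 2, i.e., B is non-increasing in C. -/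
/-!
The point `-(C+1)/C` is the convex combination of `-C/(C-1)` and `0` with weights
`(C²-1)/C²` and `1/C²`, so Jensen's inequality bounds `ψ(-(C+1)/C)`; substituting this
bound into `B(C+1)` gives exactly `B(C)`.
-/

noncomputable def uclBound (ψ : ℝ → ℝ) (c : ℝ) : ℝ :=
  c⁻¹ * ((c - 1) * ψ (-c / (c - 1)) + ψ 0)

theorem ConvexOn.apply_neg_add_one_div_le {ψ : ℝ → ℝ} (hψ : ConvexOn ℝ Set.univ ψ) {c : ℝ}
    (hc : 1 < c) :
    ψ (-(c + 1) / c) ≤ (c ^ 2 - 1) / c ^ 2 * ψ (-c / (c - 1)) + 1 / c ^ 2 * ψ 0 := by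
  have hc₀ : c ≠ 0 := by positivity
  have hc₁ : c - 1 ≠ 0 := sub_ne_zero.mpr hc.ne'
  have hpoint : (c ^ 2 - 1) / c ^ 2 * (-c / (c - 1)) + 1 / c ^ 2 * 0 = -(c + 1) / c := by
    field_simp
    ring
  have hweights : (c ^ 2 - 1) / c ^ 2 + 1 / c ^ 2 = 1 := by
    field_simp
    ring
  have hjensen := hψ.2 (Set.mem_univ (-c / (c - 1))) (Set.mem_univ 0)
    (div_nonneg (by nlinarith) (sq_nonneg c)) (by positivity) hweights
  simpa only [smul_eq_mul, hpoint] using hjensen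

theorem uclBound_add_one_le {ψ : ℝ → ℝ} (hψ : ConvexOn ℝ Set.univ ψ) {c : ℝ} (hc : 1 < c) :
    uclBound ψ (c + 1) ≤ uclBound ψ c := by
  have hc₀ : c ≠ 0 := by positivity
  have hc₁ : c - 1 ≠ 0 := sub_ne_zero.mpr hc.ne'
  unfold uclBound
  rw [add_sub_cancel_right]
  calc (c + 1)⁻¹ * (c * ψ (-(c + 1) / c) + ψ 0)
      ≤ (c + 1)⁻¹ * (c * ((c ^ 2 - 1) / c ^ 2 * ψ (-c / (c - 1)) + 1 / c ^ 2 * ψ 0) + ψ 0) := by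
        gcongr
        exact hψ.apply_neg_add_one_div_le hc
    _ = c⁻¹ * ((c - 1) * ψ (-c / (c - 1)) + ψ 0) := by
        have : c + 1 ≠ 0 := by positivity
        field_simp
        ring

theorem stmt_14_general (ψ : ℝ → ℝ) (hconv : ConvexOn ℝ Set.univ ψ)
    (B : ℕ → ℝ)
    (hB : ∀ C : ℕ, B C =
      ((C : ℝ))⁻¹ * (((C : ℝ) - 1) * ψ (-(C : ℝ) / ((C : ℝ) - 1)) + ψ 0)) :
    ∀ C : ℕ, 2 ≤ C → B (C + 1) ≤ B C := by
  intro C hC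
  have hC' : (1 : ℝ) < C := by exact_mod_cast hC
  simpa only [hB, uclBound, Nat.cast_add, Nat.cast_one] using uclBound_add_one_le hconv hC'

/-- Monotonicity of the UCL lower bound in the number of latent classes for one
negative sample: for convex non-decreasing `ψ`,
`B(C) = (1/C)((C−1)ψ(−C/(C−1)) + ψ(0))` is non-increasing: `B(C+1) ≤ B(C)` for
all integers `C ≥ 2`. -/
theorem stmt_14 (ψ : ℝ → ℝ) (hconv : ConvexOn ℝ Set.univ ψ) (hmono : Monotone ψ)
    (B : ℕ → ℝ)
    (hB : ∀ C : ℕ, B C =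
      ((C : ℝ))⁻¹ * (((C : ℝ) - 1) * ψ (-(C : ℝ) / ((C : ℝ) - 1)) + ψ 0)) :
    ∀ C : ℕ, 2 ≤ C → B (C + 1) ≤ B C :=
  stmt_14_general ψ hconv B hB
end

section
/- (Equality of HSCL and SCL losses under Neural Collapse) Suppose f is such that with probability one, for all i = 1,...,k, f(x)^⊤ f(x_i^-) = −1/(C−1) under the reference negative sampling distribution, and let η be any hardening function with finite positive normalization γ(x,y,f). Then the tilted (hard-negative) distribution coincides with the reference distribution on the support, and consequently L^{(k)}_{HSCL}(f) = L^{(k)}_{SCL}(f). -/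
open MeasureTheory
open scoped RealInnerProductSpace BigOperators

/-- Equality of HSCL and SCL losses under Neural Collapse: if, with probability one
(over `w = (x, x⁺, y) ~ ρ` and the reference i.i.d. negatives), every inner product
`⟪f x, f x⁻_i⟫` equals `−1/(C−1)`, then tilting the negatives by any hardening
function `η` (non-negative, argument-wise non-decreasing, with positive finite
normalization `γ`) leaves the loss unchanged: `L_HSCL(f) = L_SCL(f)`. -/
theorem stmt_19 {k d C : ℕ} (hC : 2 ≤ C) {X : Type*} [MeasurableSpace X]
    (ψ : (Fin k → ℝ) → ℝ)
    (η : (Fin k → ℝ) → ℝ) (hη0 : ∀ t, 0 ≤ η t) (hηmono : Monotone η)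
    (ρ : Measure (X × X × Fin C)) [IsProbabilityMeasure ρ]
    (pneg : Fin C → Measure X) [∀ y, IsProbabilityMeasure (pneg y)]
    (f : X → EuclideanSpace ℝ (Fin d))
    (γ : X → Fin C → ℝ)
    (hγ : ∀ x y, γ x y =
      ∫ xneg, η (fun i => ⟪f x, f (xneg i)⟫) ∂(Measure.pi fun _ : Fin k => pneg y))
    (hγpos : ∀ x y, 0 < γ x y)
    (hηint : ∀ x y, Integrable (fun xneg : Fin k → X => η fun i => ⟪f x, f (xneg i)⟫)
      (Measure.pi fun _ : Fin k => pneg y))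
    (hψint : ∀ w : X × X × Fin C,
      Integrable (fun xneg : Fin k → X => ψ fun i => ⟪f w.1, f (xneg i) - f w.2.1⟫)
        (Measure.pi fun _ : Fin k => pneg w.2.2))
    (hconst : ∀ᵐ w ∂ρ, ∀ᵐ xneg ∂(Measure.pi fun _ : Fin k => pneg (w.2.2 : Fin C)),
      ∀ i : Fin k, ⟪f (w.1 : X), f (xneg i)⟫ = -1 / ((C : ℝ) - 1)) :
    ∫ w, (∫ xneg, (ψ fun i => ⟪f w.1, f (xneg i) - f w.2.1⟫) *
          (η (fun i => ⟪f w.1, f (xneg i)⟫) / γ w.1 w.2.2)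
        ∂(Measure.pi fun _ : Fin k => pneg w.2.2)) ∂ρ
      = ∫ w, (∫ xneg, ψ (fun i => ⟪f w.1, f (xneg i) - f w.2.1⟫)
          ∂(Measure.pi fun _ : Fin k => pneg w.2.2)) ∂ρ := by
  apply integral_congr_ae
  filter_upwards [hconst] with w hw
  have hc : η (fun i => ⟪f w.1, f (w.1)⟫) = η (fun i => ⟪f w.1, f (w.1)⟫) := rfl
  set c : ℝ := η (fun _ : Fin k => (-1 : ℝ) / ((C : ℝ) - 1)) with hcdef
  have hηae : ∀ᵐ xneg ∂(Measure.pi fun _ : Fin k => pneg w.2.2),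
      η (fun i => ⟪f w.1, f (xneg i)⟫) = c := by
    filter_upwards [hw] with xneg hx
    congr 1
    funext i
    exact hx i
  have hγc : γ w.1 w.2.2 = c := by
    rw [hγ, integral_congr_ae hηae]
    simp
  apply integral_congr_ae
  filter_upwards [hηae] with xneg hx
  rw [hx, hγc, div_self (by rw [← hγc]; exact (hγpos w.1 w.2.2).ne'), mul_one]
end
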